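/- arXiv:1409.4389 — 5 statements merged into one kernel-verified Lean document; each statement's English description precedes it below -/
import Mathlib

section
/- Let Z be a topological space, z_0 ∈ Z, and let 𝓑 be a basis for the topology of Z. Then the collection 𝒲 of all sets W_{c,t}, where c ranges over chains in 𝓑 and t over tuples 0 = t_0 < t_1 < ⋯ < t_n = 1, is a basis for the topology of the path space P = {γ ∈ C([0,1], Z) : γ(0) = z_0} with the compact-open topology. -/
/-!
The sets `W_{c,t}` are open because evaluation at a point is continuous and
`{γ | γ([a, b]) ⊆ U}` is open in the compact-open topology.

Conversely, a neighbourhood of `γ` contains a finite intersection of sets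
`{η | η(K) ⊆ O}` with `γ(K) ⊆ O`. Each `x ∈ [0, 1]` has an open neighbourhood `A_x` meeting
only those `K` that contain `x`, and `γ` maps `A_x` into a basic set
`B_x ⊆ ⋂_{x ∈ K} O`. A Lebesgue number of the cover `(A_x)` gives a partition `t` with every
`[t_{i-1}, t_i]` inside some `A_{x_i}`; take `U_i = B_{x_i}` and `V_i` a basic neighbourhood
of `γ(t_i)` in `U_i ∩ U_{i+1}`. A path in `W_{c,t}` then maps every `K` into its `O`, because
`K` is covered by the intervals `[t_{i-1}, t_i]` that it meets.
-/

open TopologicalSpace unitInterval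

variable {Z : Type} [TopologicalSpace Z]

/-- The set `W_{c,t}` of based paths `γ` with `γ(t_i) ∈ V_i` and `γ([t_{i-1}, t_i]) ⊆ U_i`. -/
def pathBasisSet (z₀ : Z) (n : ℕ) (U V : Fin n → Set Z) (t : Fin (n + 1) → I) :
    Set {γ : C(I, Z) // γ 0 = z₀} :=
  {γ | ∀ i : Fin n, γ.1 (t i.succ) ∈ V i ∧
    ∀ s : I, t i.castSucc ≤ s → s ≤ t i.succ → γ.1 s ∈ U i}

/-- `(U_1, V_1, …, U_n, V_n)` is a chain in `𝓑`:
`U_1 ⊇ V_1 ⊆ U_2 ⊇ V_2 ⊆ ⋯ ⊆ U_n ⊇ V_n`. -/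
def IsChainIn (𝓑 : Set (Set Z)) (n : ℕ) (U V : Fin n → Set Z) : Prop :=
  (∀ i, U i ∈ 𝓑) ∧ (∀ i, V i ∈ 𝓑) ∧ (∀ i, V i ⊆ U i) ∧
    ∀ i j : Fin n, (j : ℕ) = (i : ℕ) + 1 → V i ⊆ U j

/-- The collection `𝒲` of all the sets `W_{c,t}`. -/
def pathBasis (z₀ : Z) (𝓑 : Set (Set Z)) : Set (Set {γ : C(I, Z) // γ 0 = z₀}) :=
  {W | ∃ (n : ℕ) (U V : Fin n → Set Z) (t : Fin (n + 1) → I),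
    IsChainIn 𝓑 n U V ∧ StrictMono t ∧ t 0 = 0 ∧ t (Fin.last n) = 1 ∧
      W = pathBasisSet z₀ n U V t}

open Set Filter Topology

theorem Fin.exists_castSucc_le_and_le_succ {α : Type*} [LinearOrder α] {n : ℕ}
    (t : Fin (n + 1) → α) (hn : n ≠ 0) {s : α} (h0 : t 0 ≤ s) (hs : s ≤ t (Fin.last n)) :
    ∃ i : Fin n, t i.castSucc ≤ s ∧ s ≤ t i.succ := by
  by_contra! h
  have hle : ∀ k, t k ≤ s := Fin.induction h0 fun i hi => (h i hi).le
  obtain ⟨m, rfl⟩ := Nat.exists_eq_succ_of_ne_zero hn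
  exact (h (Fin.last m) (hle _)).not_ge (Fin.succ_last m ▸ hs)

namespace unitInterval

def IsPartition {n : ℕ} (t : Fin (n + 1) → I) : Prop :=
  StrictMono t ∧ t 0 = 0 ∧ t (Fin.last n) = 1

theorem IsPartition.exists_mem_Icc {n : ℕ} {t : Fin (n + 1) → I} (ht : IsPartition t) (s : I) :
    ∃ i : Fin n, s ∈ Icc (t i.castSucc) (t i.succ) := by
  obtain ⟨-, h0, h1⟩ := ht
  have hn : n ≠ 0 := by
    rintro rfl
    exact zero_ne_one' I (h0.symm.trans h1)
  exact Fin.exists_castSucc_le_and_le_succ t hn (h0 ▸ nonneg') (h1 ▸ le_one')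

noncomputable def uniformPartition (n : ℕ) (i : Fin (n + 1)) : I :=
  ⟨i / n, div_nonneg i.val.cast_nonneg n.cast_nonneg,
    div_le_one_of_le₀ (Nat.cast_le.2 i.is_le) n.cast_nonneg⟩

@[simp]
theorem coe_uniformPartition (n : ℕ) (i : Fin (n + 1)) :
    (uniformPartition n i : ℝ) = i / n :=
  rfl

theorem isPartition_uniformPartition {n : ℕ} (hn : n ≠ 0) : IsPartition (uniformPartition n) := by
  have hn' : (0 : ℝ) < n := Nat.cast_pos.2 (Nat.pos_of_ne_zero hn)
  refine ⟨fun i j hij => ?_, Subtype.ext (by simp), Subtype.ext (by simp [hn'.ne'])⟩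
  rw [← Subtype.coe_lt_coe, coe_uniformPartition, coe_uniformPartition]
  exact div_lt_div_of_pos_right (Nat.cast_lt.2 hij) hn'

theorem Icc_uniformPartition_subset_closedBall (n : ℕ) (i : Fin n) :
    Icc (uniformPartition n i.castSucc) (uniformPartition n i.succ) ⊆
      Metric.closedBall (uniformPartition n i.castSucc) (1 / n) := by
  intro s hs
  have hdist := Real.dist_le_of_mem_Icc (x := s) (y := uniformPartition n i.castSucc)
    ⟨hs.1, hs.2⟩ ⟨le_rfl, Subtype.coe_le_coe.2 (hs.1.trans hs.2)⟩
  rw [Metric.mem_closedBall, Subtype.dist_eq]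
  refine hdist.trans_eq ?_
  simp only [coe_uniformPartition, Fin.val_succ, Fin.val_castSucc, Nat.cast_add, Nat.cast_one]
  ring

theorem exists_isPartition_Icc_subset_open_cover {ι : Type*} {c : ι → Set I}
    (hc₁ : ∀ i, IsOpen (c i)) (hc₂ : univ ⊆ ⋃ i, c i) :
    ∃ (n : ℕ) (t : Fin (n + 1) → I), IsPartition t ∧
      ∀ i : Fin n, ∃ j, Icc (t i.castSucc) (t i.succ) ⊆ c j := by
  obtain ⟨δ, hδ, hball⟩ := lebesgue_number_lemma_of_metric isCompact_univ hc₁ hc₂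
  obtain ⟨n, hn⟩ := exists_nat_one_div_lt hδ
  refine ⟨n + 1, uniformPartition (n + 1), isPartition_uniformPartition n.succ_ne_zero,
    fun i => ?_⟩
  obtain ⟨j, hj⟩ := hball (uniformPartition (n + 1) i.castSucc) trivial
  refine ⟨j, (Icc_uniformPartition_subset_closedBall _ i).trans
    ((Metric.closedBall_subset_ball ?_).trans hj)⟩
  exact_mod_cast hn

end unitInterval

theorem exists_isOpen_mem_basis_mapsTo {X Y : Type*} [TopologicalSpace X] [TopologicalSpace Y]
    {𝓑 : Set (Set Y)} (h𝓑 : IsTopologicalBasis 𝓑) (f : C(X, Y))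
    {P : Set (Set X × Set Y)} (hP : P.Finite)
    (hKU : ∀ K U, (K, U) ∈ P → IsClosed K ∧ IsOpen U ∧ MapsTo f K U) (x : X) :
    ∃ A, IsOpen A ∧ x ∈ A ∧ ∃ B ∈ 𝓑, MapsTo f A B ∧
      ∀ K U, (K, U) ∈ P → (A ∩ K).Nonempty → B ⊆ U := by
  obtain ⟨B, hB, hfxB, hBU⟩ := h𝓑.exists_subset_of_mem_open
    (a := f x) (u := ⋂ p ∈ P, ⋂ (_ : x ∈ p.1), p.2)
    (mem_iInter₂.2 fun p hp => mem_iInter.2 fun hx => (hKU _ _ hp).2.2 hx)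
    (hP.isOpen_biInter fun p hp => isOpen_iInter_of_finite fun _ => (hKU _ _ hp).2.1)
  refine ⟨f ⁻¹' B ∩ ⋂ p ∈ P, ⋂ (_ : x ∉ p.1), p.1ᶜ, ?_, ⟨hfxB, ?_⟩, B, hB, fun y hy => hy.1, ?_⟩
  · exact ((h𝓑.isOpen hB).preimage f.continuous).inter (hP.isOpen_biInter fun p hp =>
      isOpen_iInter_of_finite fun _ => (hKU _ _ hp).1.isOpen_compl)
  · exact mem_iInter₂.2 fun p _ => mem_iInter.2 fun hx => hx
  · rintro K U hKUP ⟨y, ⟨-, hy⟩, hyK⟩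
    have hxK : x ∈ K := by
      by_contra hxK
      exact mem_iInter.1 (mem_iInter₂.1 hy (K, U) hKUP) hxK hyK
    exact hBU.trans ((biInter_subset_of_mem hKUP).trans (iInter_subset _ hxK))

theorem mem_pathBasisSet {z₀ : Z} {n : ℕ} {U V : Fin n → Set Z} {t : Fin (n + 1) → I}
    {γ : {γ : C(I, Z) // γ 0 = z₀}} :
    γ ∈ pathBasisSet z₀ n U V t ↔
      ∀ i, γ.1 (t i.succ) ∈ V i ∧ MapsTo γ.1 (Icc (t i.castSucc) (t i.succ)) (U i) :=
  forall_congr' fun _ => and_congr_right' ⟨fun h _ hs => h _ hs.1 hs.2, fun h _ h₁ h₂ => h ⟨h₁, h₂⟩⟩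

theorem isOpen_pathBasisSet {z₀ : Z} {n : ℕ} {U V : Fin n → Set Z} {t : Fin (n + 1) → I}
    (hU : ∀ i, IsOpen (U i)) (hV : ∀ i, IsOpen (V i)) :
    IsOpen (pathBasisSet z₀ n U V t) := by
  refine isOpen_iff_mem_nhds.2 fun γ hγ => ?_
  rw [mem_pathBasisSet] at hγ
  refine Eventually.mono (eventually_all.2 fun i => Eventually.and ?_ ?_)
    fun η => mem_pathBasisSet.2
  · exact ((continuous_eval_const _).comp continuous_subtype_val).continuousAt.eventually_mem
      ((hV i).mem_nhds (hγ i).1)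
  · exact continuous_subtype_val.continuousAt.eventually
      (ContinuousMap.eventually_mapsTo isCompact_Icc (hU i) (hγ i).2)

theorem exists_isChainIn_of_mapsTo {X : Type*} [Preorder X] {𝓑 : Set (Set Z)}
    (h𝓑 : IsTopologicalBasis 𝓑) {n : ℕ} {U : Fin n → Set Z} (hU : ∀ i, U i ∈ 𝓑)
    {t : Fin (n + 1) → X} (ht : Monotone t) {f : X → Z}
    (hf : ∀ i, MapsTo f (Icc (t i.castSucc) (t i.succ)) (U i)) :
    ∃ V, IsChainIn 𝓑 n U V ∧ ∀ i, f (t i.succ) ∈ V i := by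
  have hV : ∀ i : Fin n, ∃ V ∈ 𝓑, f (t i.succ) ∈ V ∧
      V ⊆ U i ∩ ⋂ (j : Fin n) (_ : (j : ℕ) = i + 1), U j := by
    refine fun i => h𝓑.exists_subset_of_mem_open
      ⟨hf i ⟨ht i.castSucc_le_succ, le_rfl⟩, mem_iInter₂.2 fun j hj => ?_⟩
      ((h𝓑.isOpen (hU i)).inter (isOpen_iInter_of_finite fun j =>
        isOpen_iInter_of_finite fun _ => h𝓑.isOpen (hU j)))
    have hij : i.succ = j.castSucc := Fin.ext (by simp [hj])
    exact hij ▸ hf j ⟨le_rfl, ht j.castSucc_le_succ⟩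
  choose V hV𝓑 hfV hVU using hV
  exact ⟨V, ⟨hU, hV𝓑, fun i => (hVU i).trans inter_subset_left,
    fun i j hj => (hVU i).trans (inter_subset_right.trans (iInter₂_subset j hj))⟩, hfV⟩

theorem exists_isChainIn_isPartition_subset {𝓑 : Set (Set Z)} (h𝓑 : IsTopologicalBasis 𝓑)
    {f : C(I, Z)} {S : Set C(I, Z)} (hS : S ∈ 𝓝 f) :
    ∃ (n : ℕ) (U V : Fin n → Set Z) (t : Fin (n + 1) → I), IsChainIn 𝓑 n U V ∧ IsPartition t ∧
      (∀ i, f (t i.succ) ∈ V i ∧ MapsTo f (Icc (t i.castSucc) (t i.succ)) (U i)) ∧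
      {g : C(I, Z) | ∀ i, MapsTo g (Icc (t i.castSucc) (t i.succ)) (U i)} ⊆ S := by
  obtain ⟨P, hPfin, hP, hPS⟩ := ContinuousMap.mem_nhds_iff.1 hS
  choose A hA hxA B hB hfAB hBP using exists_isOpen_mem_basis_mapsTo h𝓑 f hPfin
    fun K U hKU => ⟨(hP K U hKU).1.isClosed, (hP K U hKU).2⟩
  obtain ⟨n, t, ht, hcover⟩ :=
    exists_isPartition_Icc_subset_open_cover hA fun x _ => mem_iUnion.2 ⟨x, hxA x⟩
  choose x hx using hcover
  have hfU : ∀ i, MapsTo f (Icc (t i.castSucc) (t i.succ)) (B (x i)) :=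
    fun i => (hfAB (x i)).mono_left (hx i)
  obtain ⟨V, hchain, hfV⟩ := exists_isChainIn_of_mapsTo h𝓑 (fun i => hB (x i)) ht.1.monotone hfU
  refine ⟨n, fun i => B (x i), V, t, hchain, ht, fun i => ⟨hfV i, hfU i⟩,
    fun g hg => hPS fun K U hKU s hs => ?_⟩
  obtain ⟨i, hi⟩ := ht.exists_mem_Icc s
  exact hBP (x i) K U hKU ⟨s, hx i hi, hs⟩ (hg i hi)

/-- The sets `W_{c,t}` form a basis for the compact-open topology on the
space of paths starting at `z₀`. -/
theorem pathBasis_isTopologicalBasis (z₀ : Z) (𝓑 : Set (Set Z))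
    (h𝓑 : IsTopologicalBasis 𝓑) :
    IsTopologicalBasis (pathBasis z₀ 𝓑) := by
  refine isTopologicalBasis_of_isOpen_of_nhds ?_ fun γ _ hγ hS => ?_
  · rintro _ ⟨n, U, V, t, ⟨hU, hV, -⟩, -, -, -, rfl⟩
    exact isOpen_pathBasisSet (fun i => h𝓑.isOpen (hU i)) fun i => h𝓑.isOpen (hV i)
  · obtain ⟨S, hSopen, rfl⟩ := isOpen_induced_iff.1 hS
    obtain ⟨n, U, V, t, hchain, ⟨hmono, h0, h1⟩, hγW, hWS⟩ :=
      exists_isChainIn_isPartition_subset h𝓑 (hSopen.mem_nhds hγ)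
    exact ⟨_, ⟨n, U, V, t, hchain, hmono, h0, h1, rfl⟩, mem_pathBasisSet.2 hγW,
      fun η hη => hWS fun i => (mem_pathBasisSet.1 hη i).2⟩
end

section
/- Let B_0, B_1, B_2 be Hausdorff topological spaces and let f_1 : B_0 → B_1 and f_2 : B_0 → B_2 be continuous maps. Then the double mapping cylinder B_1 ∪_{f_1} (B_0 × [0,1]) ∪_{f_2} B_2 is a Hausdorff topological space. -/
open TopologicalSpace unitInterval

/-- The identifications defining the double mapping cylinder of `f₁ : B₀ → B₁`, `f₂ : B₀ → B₂`:
`f₁ b ~ (b, 0)` and `f₂ b ~ (b, 1)`. -/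
def dmcRel {B₀ B₁ B₂ : Type} (f₁ : B₀ → B₁) (f₂ : B₀ → B₂) :
    (B₁ ⊕ ((B₀ × I) ⊕ B₂)) → (B₁ ⊕ ((B₀ × I) ⊕ B₂)) → Prop :=
  fun x y =>
    (∃ b : B₀, x = Sum.inl (f₁ b) ∧ y = Sum.inr (Sum.inl (b, 0))) ∨
    (∃ b : B₀, x = Sum.inr (Sum.inr (f₂ b)) ∧ y = Sum.inr (Sum.inl (b, 1)))

/-- The double mapping cylinder `B₁ ∪_{f₁} (B₀ × [0,1]) ∪_{f₂} B₂`, with the quotient topology. -/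
abbrev DMC {B₀ B₁ B₂ : Type} [TopologicalSpace B₀] [TopologicalSpace B₁] [TopologicalSpace B₂]
    (f₁ : B₀ → B₁) (f₂ : B₀ → B₂) : Type :=
  Quot (dmcRel f₁ f₂)

/-- The quotient map onto the double mapping cylinder. -/
abbrev dmcMk {B₀ B₁ B₂ : Type} [TopologicalSpace B₀] [TopologicalSpace B₁] [TopologicalSpace B₂]
    (f₁ : B₀ → B₁) (f₂ : B₀ → B₂) : (B₁ ⊕ ((B₀ × I) ⊕ B₂)) → DMC f₁ f₂ :=
  Quot.mk (dmcRel f₁ f₂)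

/-! The height coordinate `DMC → I` is continuous, so it separates points at different heights.
Points at the same height are separated by open sets of the disjoint union that are unions of
whole equivalence classes: a neighbourhood `U` of a point of `B₁` is thickened to
`U ⊔ (f₁⁻¹ U × [0,1))`, symmetrically at `B₂`, and nothing is identified in the open middle
`B₀ × (0,1)`. Such a set descends to the quotient by lifting its membership predicate, which only
has to respect the generating identifications, not the equivalence relation they generate. -/

theorem separated_quot_mk_of_saturated {X : Type*} [TopologicalSpace X] {r : X → X → Prop}
    {s t : Set X} (hs : IsOpen s) (ht : IsOpen t) (hst : Disjoint s t)
    (hs_sat : ∀ a b, r a b → (a ∈ s ↔ b ∈ s)) (ht_sat : ∀ a b, r a b → (a ∈ t ↔ b ∈ t))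
    {x y : X} (hx : x ∈ s) (hy : y ∈ t) :
    ∃ u v : Set (Quot r), IsOpen u ∧ IsOpen v ∧ Quot.mk r x ∈ u ∧ Quot.mk r y ∈ v ∧
      Disjoint u v := by
  refine ⟨{q | Quot.lift (· ∈ s) (fun a b h => propext (hs_sat a b h)) q},
    {q | Quot.lift (· ∈ t) (fun a b h => propext (ht_sat a b h)) q},
    isQuotientMap_quot_mk.isOpen_preimage.1 hs, isQuotientMap_quot_mk.isOpen_preimage.1 ht,
    hx, hy, Set.disjoint_left.2 ?_⟩
  rintro ⟨a⟩ ha ha'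
  exact Set.disjoint_left.1 hst ha ha'

lemma unitInterval.eq_zero_or_eq_one_or_mem_Ioo (s : I) : s = 0 ∨ s = 1 ∨ s ∈ Set.Ioo 0 1 := by
  rcases nonneg'.eq_or_lt with h0 | h0
  · exact Or.inl h0.symm
  rcases le_one'.eq_or_lt with h1 | h1
  · exact Or.inr (Or.inl h1)
  · exact Or.inr (Or.inr ⟨h0, h1⟩)

section

variable {B₀ B₁ B₂ : Type} [TopologicalSpace B₀] [TopologicalSpace B₁] [TopologicalSpace B₂]
  {f₁ : B₀ → B₁} {f₂ : B₀ → B₂}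

def dmcTime (f₁ : B₀ → B₁) (f₂ : B₀ → B₂) : DMC f₁ f₂ → I :=
  Quot.lift (Sum.elim (fun _ => 0) (Sum.elim Prod.snd fun _ => 1))
    (by rintro _ _ (⟨b, rfl, rfl⟩ | ⟨b, rfl, rfl⟩) <;> rfl)

lemma continuous_dmcTime : Continuous (dmcTime f₁ f₂) :=
  continuous_quot_lift _ <| continuous_const.sumElim (continuous_snd.sumElim continuous_const)

lemma exists_eq_dmcMk_inl {q : DMC f₁ f₂} (hq : dmcTime f₁ f₂ q = 0) :
    ∃ y, q = dmcMk f₁ f₂ (.inl y) := by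
  induction q using Quot.ind with
  | mk x =>
    rcases x with y | ⟨b, s⟩ | z
    · exact ⟨y, rfl⟩
    · obtain rfl : s = 0 := hq
      exact ⟨f₁ b, (Quot.sound (r := dmcRel f₁ f₂) (Or.inl ⟨b, rfl, rfl⟩)).symm⟩
    · exact absurd hq one_ne_zero

lemma exists_eq_dmcMk_inr {q : DMC f₁ f₂} (hq : dmcTime f₁ f₂ q = 1) :
    ∃ z, q = dmcMk f₁ f₂ (.inr (.inr z)) := by
  induction q using Quot.ind with
  | mk x =>
    rcases x with y | ⟨b, s⟩ | z
    · exact absurd hq zero_ne_one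
    · obtain rfl : s = 1 := hq
      exact ⟨f₂ b, (Quot.sound (r := dmcRel f₁ f₂) (Or.inr ⟨b, rfl, rfl⟩)).symm⟩
    · exact ⟨z, rfl⟩

lemma exists_eq_dmcMk_mid {q : DMC f₁ f₂} {s : I} (hq : dmcTime f₁ f₂ q = s)
    (hs : s ∈ Set.Ioo 0 1) : ∃ b, q = dmcMk f₁ f₂ (.inr (.inl (b, s))) := by
  induction q using Quot.ind with
  | mk x =>
    subst hq
    rcases x with y | ⟨b, s⟩ | z
    · exact absurd hs.1 (lt_irrefl 0)
    · exact ⟨b, rfl⟩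
    · exact absurd hs.2 (lt_irrefl 1)

lemma separated_dmcMk_inl [T2Space B₁] (hf₁ : Continuous f₁) {y y' : B₁} (hy : y ≠ y') :
    ∃ u v : Set (DMC f₁ f₂), IsOpen u ∧ IsOpen v ∧ dmcMk f₁ f₂ (.inl y) ∈ u ∧
      dmcMk f₁ f₂ (.inl y') ∈ v ∧ Disjoint u v := by
  obtain ⟨U, U', hU, hU', hyU, hyU', hUU'⟩ := t2_separation hy
  let nbhd (U : Set B₁) : Set (B₁ ⊕ ((B₀ × I) ⊕ B₂)) :=
    {x | x.elim (· ∈ U) (Sum.elim (fun p : B₀ × I => f₁ p.1 ∈ U ∧ p.2 < 1) fun _ => False)}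
  have isOpen_nbhd {U : Set B₁} (hU : IsOpen U) : IsOpen (nbhd U) :=
    isOpen_sum_iff.2 ⟨hU, isOpen_sum_iff.2
      ⟨(hU.preimage (hf₁.comp continuous_fst)).inter (isOpen_Iio.preimage continuous_snd),
        isOpen_empty⟩⟩
  have nbhd_sat (U : Set B₁) : ∀ a b, dmcRel f₁ f₂ a b → (a ∈ nbhd U ↔ b ∈ nbhd U) := by
    rintro _ _ (⟨b, rfl, rfl⟩ | ⟨b, rfl, rfl⟩) <;> simp [nbhd]
  refine separated_quot_mk_of_saturated (isOpen_nbhd hU) (isOpen_nbhd hU') ?_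
    (nbhd_sat U) (nbhd_sat U') hyU hyU'
  refine Set.disjoint_left.2 ?_
  rintro (y | p | z) h h'
  exacts [Set.disjoint_left.1 hUU' h h', Set.disjoint_left.1 hUU' h.1 h'.1, h]

lemma separated_dmcMk_inr [T2Space B₂] (hf₂ : Continuous f₂) {z z' : B₂} (hz : z ≠ z') :
    ∃ u v : Set (DMC f₁ f₂), IsOpen u ∧ IsOpen v ∧ dmcMk f₁ f₂ (.inr (.inr z)) ∈ u ∧
      dmcMk f₁ f₂ (.inr (.inr z')) ∈ v ∧ Disjoint u v := by
  obtain ⟨V, V', hV, hV', hzV, hzV', hVV'⟩ := t2_separation hz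
  let nbhd (V : Set B₂) : Set (B₁ ⊕ ((B₀ × I) ⊕ B₂)) :=
    {x | x.elim (fun _ => False) (Sum.elim (fun p : B₀ × I => f₂ p.1 ∈ V ∧ 0 < p.2) (· ∈ V))}
  have isOpen_nbhd {V : Set B₂} (hV : IsOpen V) : IsOpen (nbhd V) :=
    isOpen_sum_iff.2 ⟨isOpen_empty, isOpen_sum_iff.2
      ⟨(hV.preimage (hf₂.comp continuous_fst)).inter (isOpen_Ioi.preimage continuous_snd), hV⟩⟩
  have nbhd_sat (V : Set B₂) : ∀ a b, dmcRel f₁ f₂ a b → (a ∈ nbhd V ↔ b ∈ nbhd V) := by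
    rintro _ _ (⟨b, rfl, rfl⟩ | ⟨b, rfl, rfl⟩) <;> simp [nbhd]
  refine separated_quot_mk_of_saturated (isOpen_nbhd hV) (isOpen_nbhd hV') ?_
    (nbhd_sat V) (nbhd_sat V') hzV hzV'
  refine Set.disjoint_left.2 ?_
  rintro (y | p | z) h h'
  exacts [h, Set.disjoint_left.1 hVV' h.1 h'.1, Set.disjoint_left.1 hVV' h h']

lemma separated_dmcMk_mid [T2Space B₀] {p p' : B₀ × I} (hp : p.2 ∈ Set.Ioo 0 1)
    (hp' : p'.2 ∈ Set.Ioo 0 1) (hpp' : p ≠ p') :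
    ∃ u v : Set (DMC f₁ f₂), IsOpen u ∧ IsOpen v ∧ dmcMk f₁ f₂ (.inr (.inl p)) ∈ u ∧
      dmcMk f₁ f₂ (.inr (.inl p')) ∈ v ∧ Disjoint u v := by
  obtain ⟨W, W', hW, hW', hpW, hpW', hWW'⟩ := t2_separation hpp'
  let nbhd (W : Set (B₀ × I)) : Set (B₁ ⊕ ((B₀ × I) ⊕ B₂)) :=
    {x | x.elim (fun _ => False) (Sum.elim (fun p => p ∈ W ∧ p.2 ∈ Set.Ioo 0 1) fun _ => False)}
  have isOpen_nbhd {W : Set (B₀ × I)} (hW : IsOpen W) : IsOpen (nbhd W) :=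
    isOpen_sum_iff.2 ⟨isOpen_empty, isOpen_sum_iff.2
      ⟨hW.inter (isOpen_Ioo.preimage continuous_snd), isOpen_empty⟩⟩
  have nbhd_sat (W : Set (B₀ × I)) : ∀ a b, dmcRel f₁ f₂ a b → (a ∈ nbhd W ↔ b ∈ nbhd W) := by
    rintro _ _ (⟨b, rfl, rfl⟩ | ⟨b, rfl, rfl⟩) <;> simp [nbhd]
  refine separated_quot_mk_of_saturated (isOpen_nbhd hW) (isOpen_nbhd hW') ?_
    (nbhd_sat W) (nbhd_sat W') ⟨hpW, hp⟩ ⟨hpW', hp'⟩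
  refine Set.disjoint_left.2 ?_
  rintro (y | p | z) h h'
  exacts [h, Set.disjoint_left.1 hWW' h.1 h'.1, h]

end

/-- The double mapping cylinder of continuous maps between Hausdorff spaces
is Hausdorff. -/
theorem dmc_t2 {B₀ B₁ B₂ : Type} [TopologicalSpace B₀] [TopologicalSpace B₁] [TopologicalSpace B₂]
    [T2Space B₀] [T2Space B₁] [T2Space B₂] (f₁ : C(B₀, B₁)) (f₂ : C(B₀, B₂)) :
    T2Space (DMC ⇑f₁ ⇑f₂) := by
  refine ⟨fun p q hpq => ?_⟩
  rcases ne_or_eq (dmcTime f₁ f₂ p) (dmcTime f₁ f₂ q) with ht | ht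
  · exact separated_by_continuous continuous_dmcTime ht
  generalize hτ : dmcTime f₁ f₂ p = τ at ht
  rcases unitInterval.eq_zero_or_eq_one_or_mem_Ioo τ with rfl | rfl | hτ_mid
  · obtain ⟨y, rfl⟩ := exists_eq_dmcMk_inl hτ
    obtain ⟨y', rfl⟩ := exists_eq_dmcMk_inl ht.symm
    exact separated_dmcMk_inl f₁.continuous fun h => hpq (h ▸ rfl)
  · obtain ⟨z, rfl⟩ := exists_eq_dmcMk_inr hτ
    obtain ⟨z', rfl⟩ := exists_eq_dmcMk_inr ht.symm
    exact separated_dmcMk_inr f₂.continuous fun h => hpq (h ▸ rfl)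
  · obtain ⟨b, rfl⟩ := exists_eq_dmcMk_mid hτ hτ_mid
    obtain ⟨b', rfl⟩ := exists_eq_dmcMk_mid ht.symm hτ_mid
    exact separated_dmcMk_mid hτ_mid hτ_mid fun h => hpq (h ▸ rfl)
end

section
/- Let f_1 : B_0 → B_1 and f_2 : B_0 → B_2 be continuous maps, let B = B_1 ∪_{f_1} (B_0 × [0,1]) ∪_{f_2} B_2 be the double mapping cylinder with quotient map q, and let 𝒰_i be a basis for the topology of B_i for i = 0,1,2. Then the collection of all subsets of B of the following three forms is a basis for the topology of B (in particular each such set is open in B): (a) q(V ⊔ ⋃_α (U_α × [0, ε_α))) where V ∈ 𝒰_1, (U_α)_α is a family of elements of 𝒰_0 with ⋃_α U_α = f_1⁻¹(V), and each ε_α ∈ (0,1); (b) q(U × (β,γ)) where U ∈ 𝒰_0 and 0 < β < γ < 1; (c) q(⋃_α (U_α × (1−ε_α, 1]) ⊔ V) where V ∈ 𝒰_2, (U_α)_α is a family of elements of 𝒰_0 with ⋃_α U_α = f_2⁻¹(V), and each ε_α ∈ (0,1). -/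
open TopologicalSpace unitInterval

namespace DMCAux

lemma I_zero_ne_one : (0:I) ≠ 1 := by
  intro h; have := congrArg Subtype.val h; norm_num at this

variable {B₀ B₁ B₂ : Type} (f₁ : B₀ → B₁) (f₂ : B₀ → B₂)

/-- canonical representative -/
noncomputable def phi : (B₁ ⊕ ((B₀ × I) ⊕ B₂)) → (B₁ ⊕ ((B₀ × I) ⊕ B₂)) := fun x =>
  match x with
  | Sum.inl y => Sum.inl y
  | Sum.inr (Sum.inr z) => Sum.inr (Sum.inr z)
  | Sum.inr (Sum.inl (b, t)) =>
      if t = 0 then Sum.inl (f₁ b)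
      else if t = 1 then Sum.inr (Sum.inr (f₂ b))
      else Sum.inr (Sum.inl (b, t))

lemma phi_rel {a b} (h : dmcRel f₁ f₂ a b) : phi f₁ f₂ a = phi f₁ f₂ b := by
  rcases h with ⟨c, rfl, rfl⟩ | ⟨c, rfl, rfl⟩
  · simp [phi]
  · simp [phi, I_zero_ne_one.symm]

lemma phi_eq_inl {x v} (h : phi f₁ f₂ x = Sum.inl v) :
    x = Sum.inl v ∨ ∃ b, f₁ b = v ∧ x = Sum.inr (Sum.inl (b, (0:I))) := by
  match x with
  | Sum.inl y => exact Or.inl (by simpa [phi] using h)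
  | Sum.inr (Sum.inr z) => simp [phi] at h
  | Sum.inr (Sum.inl (b, t)) =>
      by_cases h0 : t = 0
      · subst h0; right; exact ⟨b, by simpa [phi] using h, rfl⟩
      · by_cases h1 : t = 1 <;> simp [phi, h0, h1] at h

lemma phi_eq_mid {x p} (h : phi f₁ f₂ x = Sum.inr (Sum.inl p)) :
    x = Sum.inr (Sum.inl p) := by
  match x with
  | Sum.inl y => simp [phi] at h
  | Sum.inr (Sum.inr z) => simpa [phi] using h
  | Sum.inr (Sum.inl (b, t)) =>
      by_cases h0 : t = 0
      · simp [phi, h0] at h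
      · by_cases h1 : t = 1
        · simp [phi, h0, h1] at h
        · simpa [phi, h0, h1] using h

lemma phi_eq_inrr {x z} (h : phi f₁ f₂ x = Sum.inr (Sum.inr z)) :
    x = Sum.inr (Sum.inr z) ∨ ∃ b, f₂ b = z ∧ x = Sum.inr (Sum.inl (b, (1:I))) := by
  match x with
  | Sum.inl y => simp [phi] at h
  | Sum.inr (Sum.inr w) => exact Or.inl (by simpa [phi] using h)
  | Sum.inr (Sum.inl (b, t)) =>
      by_cases h0 : t = 0
      · simp [phi, h0] at h
      · by_cases h1 : t = 1
        · subst h1; right; exact ⟨b, by simpa [phi, h0] using h, rfl⟩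
        · simp [phi, h0, h1] at h

lemma phi_mid_zero (b : B₀) : phi f₁ f₂ (Sum.inr (Sum.inl (b, (0:I)))) = Sum.inl (f₁ b) := by
  simp [phi]

lemma phi_mid_one (b : B₀) :
    phi f₁ f₂ (Sum.inr (Sum.inl (b, (1:I)))) = Sum.inr (Sum.inr (f₂ b)) := by
  simp [phi, I_zero_ne_one.symm]

lemma phi_mid {b : B₀} {t : I} (h0 : t ≠ 0) (h1 : t ≠ 1) :
    phi f₁ f₂ (Sum.inr (Sum.inl (b, t))) = Sum.inr (Sum.inl (b, t)) := by
  simp [phi, h0, h1]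

variable [TopologicalSpace B₀] [TopologicalSpace B₁] [TopologicalSpace B₂]

lemma mk_phi (x) : dmcMk f₁ f₂ (phi f₁ f₂ x) = dmcMk f₁ f₂ x := by
  match x with
  | Sum.inl y => rfl
  | Sum.inr (Sum.inr z) => rfl
  | Sum.inr (Sum.inl (b, t)) =>
      by_cases h0 : t = 0
      · subst h0
        rw [phi_mid_zero]
        exact Quot.sound (Or.inl ⟨b, rfl, rfl⟩)
      · by_cases h1 : t = 1
        · subst h1
          rw [phi_mid_one]
          exact Quot.sound (Or.inr ⟨b, rfl, rfl⟩)
        · rw [phi_mid f₁ f₂ h0 h1]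

lemma mk_eq_mk {x y} : dmcMk f₁ f₂ x = dmcMk f₁ f₂ y ↔ phi f₁ f₂ x = phi f₁ f₂ y := by
  constructor
  · intro h
    exact congrArg (Quot.lift (phi f₁ f₂) fun a b hab => phi_rel f₁ f₂ hab) h
  · intro h
    rw [← mk_phi f₁ f₂ x, ← mk_phi f₁ f₂ y, h]

lemma mem_preimage_image {T : Set (B₁ ⊕ ((B₀ × I) ⊕ B₂))} {x} :
    x ∈ dmcMk f₁ f₂ ⁻¹' (dmcMk f₁ f₂ '' T) ↔ ∃ t ∈ T, phi f₁ f₂ t = phi f₁ f₂ x := by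
  simp only [Set.mem_preimage, Set.mem_image]
  constructor
  · rintro ⟨t, ht, he⟩; exact ⟨t, ht, (mk_eq_mk f₁ f₂).mp he⟩
  · rintro ⟨t, ht, he⟩; exact ⟨t, ht, (mk_eq_mk f₁ f₂).mpr he⟩

lemma isOpen_Ico_zero (ε : I) : IsOpen (Set.Ico (0:I) ε) := by
  have : Set.Ico (0:I) ε = Set.Iio ε :=
    Set.ext fun x => ⟨fun h => h.2, fun h => ⟨unitInterval.nonneg', h⟩⟩
  rw [this]; exact isOpen_Iio

lemma isOpen_Ioc_one (a : I) : IsOpen (Set.Ioc a 1) := by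
  have : Set.Ioc a (1:I) = Set.Ioi a :=
    Set.ext fun x => ⟨fun h => h.1, fun h => ⟨h, unitInterval.le_one'⟩⟩
  rw [this]; exact isOpen_Ioi

section Saturation

variable {B₀ B₁ B₂ : Type} [TopologicalSpace B₀] [TopologicalSpace B₁] [TopologicalSpace B₂]
  (f₁ : B₀ → B₁) (f₂ : B₀ → B₂)

lemma ltI {x y : I} : x < y ↔ (x:ℝ) < (y:ℝ) := Subtype.coe_lt_coe.symm

lemma preimA {V : Set B₁} {ι : Type} {U : ι → Set B₀}
    (hUV : (⋃ α, U α) = f₁ ⁻¹' V) {ε : ι → I} (hε : ∀ α, 0 < ε α ∧ ε α < 1) :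
    dmcMk f₁ f₂ ⁻¹' (dmcMk f₁ f₂ ''
      (Sum.inl '' V ∪ (Sum.inr ∘ Sum.inl) '' (⋃ α, U α ×ˢ Set.Ico 0 (ε α)))) =
    Sum.inl '' V ∪ (Sum.inr ∘ Sum.inl) '' (⋃ α, U α ×ˢ Set.Ico 0 (ε α)) := by
  set M := ⋃ α, U α ×ˢ Set.Ico 0 (ε α) with hM
  apply Set.Subset.antisymm _ (Set.subset_preimage_image _ _)
  intro x hx
  obtain ⟨t, ht, hphi⟩ := (mem_preimage_image f₁ f₂).mp hx
  have key : ∀ v ∈ V, phi f₁ f₂ x = Sum.inl v →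
      x ∈ Sum.inl '' V ∪ (Sum.inr ∘ Sum.inl) '' M := by
    intro v hv hxv
    rcases phi_eq_inl f₁ f₂ hxv with rfl | ⟨b, hb, rfl⟩
    · exact Or.inl ⟨v, hv, rfl⟩
    · have hbV : b ∈ ⋃ α, U α := by
        rw [hUV]; show f₁ b ∈ V; rw [hb]; exact hv
      obtain ⟨α, hα⟩ := Set.mem_iUnion.mp hbV
      exact Or.inr ⟨(b, 0), Set.mem_iUnion.mpr ⟨α, ⟨hα, ⟨le_refl _, (hε α).1⟩⟩⟩, rfl⟩
  rcases ht with ⟨v, hv, rfl⟩ | ⟨⟨b, s⟩, hbs, rfl⟩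
  · exact key v hv hphi.symm
  · obtain ⟨α, hmem⟩ := Set.mem_iUnion.mp hbs
    have hs1 : s ≠ 1 := ne_of_lt (lt_of_lt_of_le hmem.2.2 (le_of_lt (hε α).2))
    by_cases h0 : s = 0
    · subst h0
      rw [show ((Sum.inr ∘ Sum.inl) (b, (0:I)) : B₁ ⊕ ((B₀ × I) ⊕ B₂))
          = Sum.inr (Sum.inl (b, 0)) from rfl, phi_mid_zero] at hphi
      have hfbV : f₁ b ∈ V := by
        have : b ∈ ⋃ α, U α := Set.mem_iUnion.mpr ⟨α, hmem.1⟩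
        rw [hUV] at this; exact this
      exact key _ hfbV hphi.symm
    · rw [show ((Sum.inr ∘ Sum.inl) (b, s) : B₁ ⊕ ((B₀ × I) ⊕ B₂))
          = Sum.inr (Sum.inl (b, s)) from rfl, phi_mid f₁ f₂ h0 hs1] at hphi
      have hxe := phi_eq_mid f₁ f₂ hphi.symm
      rw [hxe]
      exact Or.inr ⟨(b, s), hbs, rfl⟩

lemma isOpenA {V : Set B₁} (hV : IsOpen V) {ι : Type} {U : ι → Set B₀}
    (hU : ∀ α, IsOpen (U α)) (hUV : (⋃ α, U α) = f₁ ⁻¹' V)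
    {ε : ι → I} (hε : ∀ α, 0 < ε α ∧ ε α < 1) :
    IsOpen (dmcMk f₁ f₂ ''
      (Sum.inl '' V ∪ (Sum.inr ∘ Sum.inl) '' (⋃ α, U α ×ˢ Set.Ico 0 (ε α)))) := by
  rw [← (isQuotientMap_quot_mk (r := dmcRel f₁ f₂)).isOpen_preimage]
  rw [show Quot.mk (dmcRel f₁ f₂) = dmcMk f₁ f₂ from rfl, preimA f₁ f₂ hUV hε]
  rw [isOpen_sum_iff]
  constructor
  · have : Sum.inl ⁻¹' (Sum.inl '' V ∪ (Sum.inr ∘ Sum.inl) ''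
        (⋃ α, U α ×ˢ Set.Ico 0 (ε α)) : Set (B₁ ⊕ ((B₀ × I) ⊕ B₂))) = V := by
      ext y; simp
    rw [this]; exact hV
  · rw [isOpen_sum_iff]
    constructor
    · have : Sum.inl ⁻¹' (Sum.inr ⁻¹' (Sum.inl '' V ∪ (Sum.inr ∘ Sum.inl) ''
          (⋃ α, U α ×ˢ Set.Ico 0 (ε α)) : Set (B₁ ⊕ ((B₀ × I) ⊕ B₂))))
          = ⋃ α, U α ×ˢ Set.Ico 0 (ε α) := by
        ext p; simp
      rw [this]
      exact isOpen_iUnion fun α => (hU α).prod (isOpen_Ico_zero _)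
    · have : Sum.inr ⁻¹' (Sum.inr ⁻¹' (Sum.inl '' V ∪ (Sum.inr ∘ Sum.inl) ''
          (⋃ α, U α ×ˢ Set.Ico 0 (ε α)) : Set (B₁ ⊕ ((B₀ × I) ⊕ B₂)))) = ∅ := by
        ext z; simp
      rw [this]; exact isOpen_empty

lemma preimB {U : Set B₀} {β γ : I} (hβ : 0 < β) (hγ : γ < 1) :
    dmcMk f₁ f₂ ⁻¹' (dmcMk f₁ f₂ '' ((Sum.inr ∘ Sum.inl) '' (U ×ˢ Set.Ioo β γ))) =
    (Sum.inr ∘ Sum.inl) '' (U ×ˢ Set.Ioo β γ) := by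
  apply Set.Subset.antisymm _ (Set.subset_preimage_image _ _)
  intro x hx
  obtain ⟨t, ht, hphi⟩ := (mem_preimage_image f₁ f₂).mp hx
  obtain ⟨⟨b, s⟩, hbs, rfl⟩ := ht
  have hs0 : s ≠ 0 := ne_of_gt (lt_trans hβ hbs.2.1)
  have hs1 : s ≠ 1 := ne_of_lt (lt_trans hbs.2.2 hγ)
  rw [show ((Sum.inr ∘ Sum.inl) (b, s) : B₁ ⊕ ((B₀ × I) ⊕ B₂))
      = Sum.inr (Sum.inl (b, s)) from rfl, phi_mid f₁ f₂ hs0 hs1] at hphi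
  have hxe := phi_eq_mid f₁ f₂ hphi.symm
  rw [hxe]
  exact ⟨(b, s), hbs, rfl⟩

lemma isOpenB {U : Set B₀} (hUo : IsOpen U) {β γ : I} (hβ : 0 < β) (hγ : γ < 1) :
    IsOpen (dmcMk f₁ f₂ '' ((Sum.inr ∘ Sum.inl) '' (U ×ˢ Set.Ioo β γ))) := by
  rw [← (isQuotientMap_quot_mk (r := dmcRel f₁ f₂)).isOpen_preimage]
  rw [show Quot.mk (dmcRel f₁ f₂) = dmcMk f₁ f₂ from rfl, preimB f₁ f₂ hβ hγ]
  rw [isOpen_sum_iff]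
  constructor
  · have : Sum.inl ⁻¹' ((Sum.inr ∘ Sum.inl) '' (U ×ˢ Set.Ioo β γ)
        : Set (B₁ ⊕ ((B₀ × I) ⊕ B₂))) = ∅ := by ext; simp
    rw [this]; exact isOpen_empty
  rw [isOpen_sum_iff]
  constructor
  · have : Sum.inl ⁻¹' (Sum.inr ⁻¹' ((Sum.inr ∘ Sum.inl) '' (U ×ˢ Set.Ioo β γ)
        : Set (B₁ ⊕ ((B₀ × I) ⊕ B₂)))) = U ×ˢ Set.Ioo β γ := by ext; simp
    rw [this]
    exact hUo.prod isOpen_Ioo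
  · have : Sum.inr ⁻¹' (Sum.inr ⁻¹' ((Sum.inr ∘ Sum.inl) '' (U ×ˢ Set.Ioo β γ)
        : Set (B₁ ⊕ ((B₀ × I) ⊕ B₂)))) = ∅ := by ext; simp
    rw [this]; exact isOpen_empty

lemma preimC {V : Set B₂} {ι : Type} {U : ι → Set B₀}
    (hUV : (⋃ α, U α) = f₂ ⁻¹' V) {ε : ι → I} (hε : ∀ α, 0 < ε α ∧ ε α < 1) :
    dmcMk f₁ f₂ ⁻¹' (dmcMk f₁ f₂ ''
      ((Sum.inr ∘ Sum.inl) '' (⋃ α, U α ×ˢ Set.Ioc (unitInterval.symm (ε α)) 1) ∪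
        (Sum.inr ∘ Sum.inr) '' V)) =
    (Sum.inr ∘ Sum.inl) '' (⋃ α, U α ×ˢ Set.Ioc (unitInterval.symm (ε α)) 1) ∪
      (Sum.inr ∘ Sum.inr) '' V := by
  set M := ⋃ α, U α ×ˢ Set.Ioc (unitInterval.symm (ε α)) 1 with hM
  apply Set.Subset.antisymm _ (Set.subset_preimage_image _ _)
  intro x hx
  obtain ⟨t, ht, hphi⟩ := (mem_preimage_image f₁ f₂).mp hx
  have key : ∀ v ∈ V, phi f₁ f₂ x = Sum.inr (Sum.inr v) →
      x ∈ (Sum.inr ∘ Sum.inl) '' M ∪ (Sum.inr ∘ Sum.inr) '' V := by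
    intro v hv hxv
    rcases phi_eq_inrr f₁ f₂ hxv with rfl | ⟨b, hb, rfl⟩
    · exact Or.inr ⟨v, hv, rfl⟩
    · have hbV : b ∈ ⋃ α, U α := by
        rw [hUV]; show f₂ b ∈ V; rw [hb]; exact hv
      obtain ⟨α, hα⟩ := Set.mem_iUnion.mp hbV
      have hσ : unitInterval.symm (ε α) < 1 := by
        have h0 : (0:ℝ) < ε α := by simpa using ltI.mp (hε α).1
        rw [ltI]
        simp only [unitInterval.coe_symm_eq, Set.Icc.coe_one]
        linarith
      exact Or.inl ⟨(b, 1), Set.mem_iUnion.mpr ⟨α, ⟨hα, ⟨hσ, le_refl _⟩⟩⟩, rfl⟩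
  rcases ht with ⟨⟨b, s⟩, hbs, rfl⟩ | ⟨v, hv, rfl⟩
  · obtain ⟨α, hmem⟩ := Set.mem_iUnion.mp hbs
    have hs0 : s ≠ 0 := by
      have h1 : unitInterval.symm (ε α) < s := hmem.2.1
      have h2 : (0:I) ≤ unitInterval.symm (ε α) := unitInterval.nonneg'
      exact ne_of_gt (lt_of_le_of_lt h2 h1)
    by_cases h1 : s = 1
    · subst h1
      rw [show ((Sum.inr ∘ Sum.inl) (b, (1:I)) : B₁ ⊕ ((B₀ × I) ⊕ B₂))
          = Sum.inr (Sum.inl (b, 1)) from rfl, phi_mid_one] at hphi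
      have hfbV : f₂ b ∈ V := by
        have : b ∈ ⋃ α, U α := Set.mem_iUnion.mpr ⟨α, hmem.1⟩
        rw [hUV] at this; exact this
      exact key _ hfbV hphi.symm
    · rw [show ((Sum.inr ∘ Sum.inl) (b, s) : B₁ ⊕ ((B₀ × I) ⊕ B₂))
          = Sum.inr (Sum.inl (b, s)) from rfl, phi_mid f₁ f₂ hs0 h1] at hphi
      have hxe := phi_eq_mid f₁ f₂ hphi.symm
      rw [hxe]
      exact Or.inl ⟨(b, s), hbs, rfl⟩
  · exact key v hv hphi.symm

lemma isOpenC {V : Set B₂} (hV : IsOpen V) {ι : Type} {U : ι → Set B₀}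
    (hU : ∀ α, IsOpen (U α)) (hUV : (⋃ α, U α) = f₂ ⁻¹' V)
    {ε : ι → I} (hε : ∀ α, 0 < ε α ∧ ε α < 1) :
    IsOpen (dmcMk f₁ f₂ ''
      ((Sum.inr ∘ Sum.inl) '' (⋃ α, U α ×ˢ Set.Ioc (unitInterval.symm (ε α)) 1) ∪
        (Sum.inr ∘ Sum.inr) '' V)) := by
  rw [← (isQuotientMap_quot_mk (r := dmcRel f₁ f₂)).isOpen_preimage]
  rw [show Quot.mk (dmcRel f₁ f₂) = dmcMk f₁ f₂ from rfl, preimC f₁ f₂ hUV hε]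
  rw [isOpen_sum_iff]
  constructor
  · have : Sum.inl ⁻¹' ((Sum.inr ∘ Sum.inl) ''
        (⋃ α, U α ×ˢ Set.Ioc (unitInterval.symm (ε α)) 1) ∪ (Sum.inr ∘ Sum.inr) '' V
        : Set (B₁ ⊕ ((B₀ × I) ⊕ B₂))) = ∅ := by ext; simp
    rw [this]; exact isOpen_empty
  · rw [isOpen_sum_iff]
    constructor
    · have : Sum.inl ⁻¹' (Sum.inr ⁻¹' ((Sum.inr ∘ Sum.inl) ''
          (⋃ α, U α ×ˢ Set.Ioc (unitInterval.symm (ε α)) 1) ∪ (Sum.inr ∘ Sum.inr) '' V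
          : Set (B₁ ⊕ ((B₀ × I) ⊕ B₂))))
          = ⋃ α, U α ×ˢ Set.Ioc (unitInterval.symm (ε α)) 1 := by ext; simp
      rw [this]
      exact isOpen_iUnion fun α => (hU α).prod (isOpen_Ioc_one _)
    · have : Sum.inr ⁻¹' (Sum.inr ⁻¹' ((Sum.inr ∘ Sum.inl) ''
          (⋃ α, U α ×ˢ Set.Ioc (unitInterval.symm (ε α)) 1) ∪ (Sum.inr ∘ Sum.inr) '' V
          : Set (B₁ ⊕ ((B₀ × I) ⊕ B₂)))) = V := by ext; simp
      rw [this]; exact hV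

end Saturation

end DMCAux

section Basis

variable {B₀ B₁ B₂ : Type} [TopologicalSpace B₀] [TopologicalSpace B₁] [TopologicalSpace B₂]
  (f₁ : C(B₀, B₁)) (f₂ : C(B₀, B₂)) (𝒰₀ : Set (Set B₀)) (𝒰₁ : Set (Set B₁)) (𝒰₂ : Set (Set B₂))

/-- Sets of the form (a): `q(V ⊔ ⋃_α U_α × [0, ε_α))` with `⋃_α U_α = f₁⁻¹(V)`. -/
def FormA (S : Set (DMC ⇑f₁ ⇑f₂)) : Prop :=
  ∃ (V : Set B₁) (_ : V ∈ 𝒰₁) (ι : Type) (U : ι → Set B₀) (ε : ι → I),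
    (∀ α, U α ∈ 𝒰₀) ∧ (⋃ α, U α) = ⇑f₁ ⁻¹' V ∧ (∀ α, 0 < ε α ∧ ε α < 1) ∧
    S = dmcMk ⇑f₁ ⇑f₂ ''
      (Sum.inl '' V ∪ (Sum.inr ∘ Sum.inl) '' (⋃ α, U α ×ˢ Set.Ico 0 (ε α)))

/-- Sets of the form (b): `q(U × (β, γ))` with `0 < β < γ < 1`. -/
def FormB (S : Set (DMC ⇑f₁ ⇑f₂)) : Prop :=
  ∃ (U : Set B₀) (_ : U ∈ 𝒰₀) (β γ : I), 0 < β ∧ β < γ ∧ γ < 1 ∧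
    S = dmcMk ⇑f₁ ⇑f₂ '' ((Sum.inr ∘ Sum.inl) '' (U ×ˢ Set.Ioo β γ))

/-- Sets of the form (c): `q(⋃_α U_α × (1 - ε_α, 1] ⊔ V)` with `⋃_α U_α = f₂⁻¹(V)`. -/
def FormC (S : Set (DMC ⇑f₁ ⇑f₂)) : Prop :=
  ∃ (V : Set B₂) (_ : V ∈ 𝒰₂) (ι : Type) (U : ι → Set B₀) (ε : ι → I),
    (∀ α, U α ∈ 𝒰₀) ∧ (⋃ α, U α) = ⇑f₂ ⁻¹' V ∧ (∀ α, 0 < ε α ∧ ε α < 1) ∧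
    S = dmcMk ⇑f₁ ⇑f₂ ''
      ((Sum.inr ∘ Sum.inl) '' (⋃ α, U α ×ˢ Set.Ioc (unitInterval.symm (ε α)) 1) ∪
        (Sum.inr ∘ Sum.inr) '' V)

open DMCAux in
lemma existsA (h₀ : IsTopologicalBasis 𝒰₀) (h₁ : IsTopologicalBasis 𝒰₁)
    {W : Set (DMC ⇑f₁ ⇑f₂)} (hW : IsOpen W) {y : B₁}
    (hy : dmcMk ⇑f₁ ⇑f₂ (Sum.inl y) ∈ W) :
    ∃ S, FormA f₁ f₂ 𝒰₀ 𝒰₁ S ∧ dmcMk ⇑f₁ ⇑f₂ (Sum.inl y) ∈ S ∧ S ⊆ W := by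
  set q := dmcMk ⇑f₁ ⇑f₂ with hq
  set P := q ⁻¹' W with hPdef
  have hPopen : IsOpen P := hW.preimage continuous_quot_mk
  have hP1 : IsOpen (Sum.inl ⁻¹' P : Set B₁) := hPopen.preimage continuous_inl
  obtain ⟨V, hV𝒰, hyV, hVP⟩ := h₁.exists_subset_of_mem_open (show y ∈ Sum.inl ⁻¹' P from hy) hP1
  have hPm : IsOpen ((fun p : B₀ × I => Sum.inr (Sum.inl p)) ⁻¹' P) :=
    hPopen.preimage (continuous_inr.comp continuous_inl)
  have key : ∀ b : B₀, f₁ b ∈ V → ∃ U ∈ 𝒰₀, ∃ ε : I, 0 < ε ∧ ε < 1 ∧ b ∈ U ∧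
      U ⊆ ⇑f₁ ⁻¹' V ∧ ∀ p ∈ U ×ˢ Set.Ico (0:I) ε, Sum.inr (Sum.inl p) ∈ P := by
    intro b hb
    have hb0 : (b, (0:I)) ∈ (fun p : B₀ × I => Sum.inr (Sum.inl p)) ⁻¹' P := by
      show q (Sum.inr (Sum.inl (b, 0))) ∈ W
      have hrel : dmcRel ⇑f₁ ⇑f₂ (Sum.inl (f₁ b)) (Sum.inr (Sum.inl (b, 0))) :=
        Or.inl ⟨b, rfl, rfl⟩
      have heq : q (Sum.inl (f₁ b)) = q (Sum.inr (Sum.inl (b, 0))) := Quot.sound hrel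
      rw [← heq]
      exact hVP hb
    have hnb := hPm.mem_nhds hb0
    rw [mem_nhds_prod_iff] at hnb
    obtain ⟨A, hA, J, hJ, hAJ⟩ := hnb
    obtain ⟨δ, hδ, hball⟩ := Metric.mem_nhds_iff.mp hJ
    have hfV : IsOpen (⇑f₁ ⁻¹' V) := (h₁.isOpen hV𝒰).preimage f₁.continuous
    obtain ⟨U, hU𝒰, hbU, hUsub⟩ :=
      h₀.mem_nhds_iff.mp (Filter.inter_mem hA (hfV.mem_nhds hb))
    refine ⟨U, hU𝒰, ⟨min δ 2⁻¹, le_min hδ.le (by norm_num),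
        (min_le_right _ _).trans (by norm_num)⟩, ?_, ?_, hbU,
        fun x hx => (hUsub hx).2, ?_⟩
    · rw [ltI]; exact lt_min hδ (by norm_num)
    · rw [ltI]
      simp only [Set.Icc.coe_one]
      exact lt_of_le_of_lt (min_le_right _ _) (by norm_num)
    · rintro ⟨c, s⟩ ⟨hc, hs⟩
      apply hAJ
      refine ⟨(hUsub hc).1, hball ?_⟩
      have hslt : (s:ℝ) < min δ 2⁻¹ := ltI.mp hs.2
      simp only [Metric.mem_ball, Subtype.dist_eq, Set.Icc.coe_zero, Real.dist_eq]
      rw [sub_zero, abs_of_nonneg s.2.1]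
      exact lt_of_lt_of_le hslt (min_le_left _ _)
  choose U hU𝒰 ε hε0 hε1 hbm hsV hsP using fun i : {b : B₀ // f₁ b ∈ V} => key i.1 i.2
  have hUnion : (⋃ i, U i) = ⇑f₁ ⁻¹' V := by
    apply Set.Subset.antisymm (Set.iUnion_subset hsV)
    intro b hb
    exact Set.mem_iUnion.mpr ⟨⟨b, hb⟩, hbm ⟨b, hb⟩⟩
  refine ⟨q '' (Sum.inl '' V ∪ (Sum.inr ∘ Sum.inl) '' (⋃ i, U i ×ˢ Set.Ico 0 (ε i))),
    ⟨V, hV𝒰, _, U, ε, hU𝒰, hUnion, fun i => ⟨hε0 i, hε1 i⟩, rfl⟩,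
    ⟨Sum.inl y, Or.inl ⟨y, hyV, rfl⟩, rfl⟩, ?_⟩
  rw [Set.image_subset_iff]
  rintro x (⟨v, hv, rfl⟩ | ⟨p, hp, rfl⟩)
  · exact hVP hv
  · obtain ⟨i, hpi⟩ := Set.mem_iUnion.mp hp
    exact hsP i p hpi

open DMCAux in
lemma existsC (h₀ : IsTopologicalBasis 𝒰₀) (h₂ : IsTopologicalBasis 𝒰₂)
    {W : Set (DMC ⇑f₁ ⇑f₂)} (hW : IsOpen W) {z : B₂}
    (hz : dmcMk ⇑f₁ ⇑f₂ (Sum.inr (Sum.inr z)) ∈ W) :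
    ∃ S, FormC f₁ f₂ 𝒰₀ 𝒰₂ S ∧ dmcMk ⇑f₁ ⇑f₂ (Sum.inr (Sum.inr z)) ∈ S ∧ S ⊆ W := by
  set q := dmcMk ⇑f₁ ⇑f₂ with hq
  set P := q ⁻¹' W with hPdef
  have hPopen : IsOpen P := hW.preimage continuous_quot_mk
  have hP2 : IsOpen ((fun z : B₂ => Sum.inr (Sum.inr z)) ⁻¹' P) :=
    hPopen.preimage (continuous_inr.comp continuous_inr)
  obtain ⟨V, hV𝒰, hzV, hVP⟩ := h₂.exists_subset_of_mem_open
    (show z ∈ (fun z : B₂ => Sum.inr (Sum.inr z)) ⁻¹' P from hz) hP2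
  have hPm : IsOpen ((fun p : B₀ × I => Sum.inr (Sum.inl p)) ⁻¹' P) :=
    hPopen.preimage (continuous_inr.comp continuous_inl)
  have key : ∀ b : B₀, f₂ b ∈ V → ∃ U ∈ 𝒰₀, ∃ ε : I, 0 < ε ∧ ε < 1 ∧ b ∈ U ∧
      U ⊆ ⇑f₂ ⁻¹' V ∧
      ∀ p ∈ U ×ˢ Set.Ioc (unitInterval.symm ε) (1:I), Sum.inr (Sum.inl p) ∈ P := by
    intro b hb
    have hb1 : (b, (1:I)) ∈ (fun p : B₀ × I => Sum.inr (Sum.inl p)) ⁻¹' P := by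
      show q (Sum.inr (Sum.inl (b, 1))) ∈ W
      have hrel : dmcRel ⇑f₁ ⇑f₂ (Sum.inr (Sum.inr (f₂ b))) (Sum.inr (Sum.inl (b, 1))) :=
        Or.inr ⟨b, rfl, rfl⟩
      have heq : q (Sum.inr (Sum.inr (f₂ b))) = q (Sum.inr (Sum.inl (b, 1))) := Quot.sound hrel
      rw [← heq]
      exact hVP hb
    have hnb := hPm.mem_nhds hb1
    rw [mem_nhds_prod_iff] at hnb
    obtain ⟨A, hA, J, hJ, hAJ⟩ := hnb
    obtain ⟨δ, hδ, hball⟩ := Metric.mem_nhds_iff.mp hJ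
    have hfV : IsOpen (⇑f₂ ⁻¹' V) := (h₂.isOpen hV𝒰).preimage f₂.continuous
    obtain ⟨U, hU𝒰, hbU, hUsub⟩ :=
      h₀.mem_nhds_iff.mp (Filter.inter_mem hA (hfV.mem_nhds hb))
    refine ⟨U, hU𝒰, ⟨min δ 2⁻¹, le_min hδ.le (by norm_num),
        (min_le_right _ _).trans (by norm_num)⟩, ?_, ?_, hbU,
        fun x hx => (hUsub hx).2, ?_⟩
    · rw [ltI]; exact lt_min hδ (by norm_num)
    · rw [ltI]
      simp only [Set.Icc.coe_one]
      exact lt_of_le_of_lt (min_le_right _ _) (by norm_num)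
    · rintro ⟨c, s⟩ ⟨hc, hs⟩
      apply hAJ
      refine ⟨(hUsub hc).1, hball ?_⟩
      have hslt : 1 - (min δ 2⁻¹) < (s:ℝ) := by
        have := ltI.mp hs.1
        simpa [unitInterval.coe_symm_eq] using this
      simp only [Metric.mem_ball, Subtype.dist_eq, Set.Icc.coe_one, Real.dist_eq]
      rw [abs_of_nonpos (by linarith [s.2.2] : (s:ℝ) - 1 ≤ 0)]
      have := min_le_left δ 2⁻¹
      linarith
  choose U hU𝒰 ε hε0 hε1 hbm hsV hsP using fun i : {b : B₀ // f₂ b ∈ V} => key i.1 i.2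
  have hUnion : (⋃ i, U i) = ⇑f₂ ⁻¹' V := by
    apply Set.Subset.antisymm (Set.iUnion_subset hsV)
    intro b hb
    exact Set.mem_iUnion.mpr ⟨⟨b, hb⟩, hbm ⟨b, hb⟩⟩
  refine ⟨q '' ((Sum.inr ∘ Sum.inl) ''
      (⋃ i, U i ×ˢ Set.Ioc (unitInterval.symm (ε i)) 1) ∪ (Sum.inr ∘ Sum.inr) '' V),
    ⟨V, hV𝒰, _, U, ε, hU𝒰, hUnion, fun i => ⟨hε0 i, hε1 i⟩, rfl⟩,
    ⟨Sum.inr (Sum.inr z), Or.inr ⟨z, hzV, rfl⟩, rfl⟩, ?_⟩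
  rw [Set.image_subset_iff]
  rintro x (⟨p, hp, rfl⟩ | ⟨v, hv, rfl⟩)
  · obtain ⟨i, hpi⟩ := Set.mem_iUnion.mp hp
    exact hsP i p hpi
  · exact hVP hv

open DMCAux in
lemma existsB (h₀ : IsTopologicalBasis 𝒰₀)
    {W : Set (DMC ⇑f₁ ⇑f₂)} (hW : IsOpen W) {b : B₀} {t : I}
    (ht0 : (0:I) < t) (ht1 : t < 1)
    (hx : dmcMk ⇑f₁ ⇑f₂ (Sum.inr (Sum.inl (b, t))) ∈ W) :
    ∃ S, FormB f₁ f₂ 𝒰₀ S ∧ dmcMk ⇑f₁ ⇑f₂ (Sum.inr (Sum.inl (b, t))) ∈ S ∧ S ⊆ W := by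
  set q := dmcMk ⇑f₁ ⇑f₂ with hq
  set P := q ⁻¹' W with hPdef
  have hPopen : IsOpen P := hW.preimage continuous_quot_mk
  have hPm : IsOpen ((fun p : B₀ × I => Sum.inr (Sum.inl p)) ⁻¹' P) :=
    hPopen.preimage (continuous_inr.comp continuous_inl)
  have hnb := hPm.mem_nhds (show (b, t) ∈ _ from hx)
  rw [mem_nhds_prod_iff] at hnb
  obtain ⟨A, hA, J, hJ, hAJ⟩ := hnb
  obtain ⟨δ, hδ, hball⟩ := Metric.mem_nhds_iff.mp hJ
  obtain ⟨U, hU𝒰, hbU, hUA⟩ := h₀.mem_nhds_iff.mp hA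
  have ht0' : (0:ℝ) < t := by simpa using ltI.mp ht0
  have ht1' : (t:ℝ) < 1 := by simpa using ltI.mp ht1
  set r : ℝ := min δ (min (t:ℝ) (1 - t)) with hr
  have hrpos : 0 < r := lt_min hδ (lt_min ht0' (by linarith))
  have hrt : r ≤ (t:ℝ) := (min_le_right _ _).trans (min_le_left _ _)
  have hrt1 : r ≤ 1 - (t:ℝ) := (min_le_right _ _).trans (min_le_right _ _)
  have hrδ : r ≤ δ := min_le_left _ _
  set β : I := ⟨(t:ℝ) - r / 2, by constructor <;> [linarith; linarith [t.2.2]]⟩ with hβ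
  set γ : I := ⟨(t:ℝ) + r / 2, by constructor <;> [linarith [t.2.1]; linarith]⟩ with hγ
  have hβ0 : (0:I) < β := by rw [ltI]; show (0:ℝ) < (t:ℝ) - r / 2; linarith
  have hβγ : β < γ := by rw [ltI]; show (t:ℝ) - r / 2 < (t:ℝ) + r / 2; linarith
  have hγ1 : γ < 1 := by
    rw [ltI]; simp only [Set.Icc.coe_one]; show (t:ℝ) + r / 2 < 1; linarith
  have htIoo : t ∈ Set.Ioo β γ := by
    constructor
    · rw [ltI]; show (t:ℝ) - r / 2 < (t:ℝ); linarith
    · rw [ltI]; show (t:ℝ) < (t:ℝ) + r / 2; linarith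
  refine ⟨q '' ((Sum.inr ∘ Sum.inl) '' (U ×ˢ Set.Ioo β γ)),
    ⟨U, hU𝒰, β, γ, hβ0, hβγ, hγ1, rfl⟩,
    ⟨Sum.inr (Sum.inl (b, t)), ⟨(b, t), ⟨hbU, htIoo⟩, rfl⟩, rfl⟩, ?_⟩
  rw [Set.image_subset_iff]
  rintro x ⟨⟨c, s⟩, ⟨hc, hs⟩, rfl⟩
  apply hAJ
  refine ⟨hUA hc, hball ?_⟩
  have hs1 : (t:ℝ) - r / 2 < (s:ℝ) := ltI.mp hs.1
  have hs2 : (s:ℝ) < (t:ℝ) + r / 2 := ltI.mp hs.2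
  simp only [Metric.mem_ball, Subtype.dist_eq, Real.dist_eq]
  rw [abs_lt]
  constructor <;> linarith

/-- The sets of the forms (a), (b), (c) built from bases of `B₀`, `B₁`, `B₂`
form a basis for the topology of the double mapping cylinder; in particular they are open. -/
theorem dmc_basis (h₀ : IsTopologicalBasis 𝒰₀) (h₁ : IsTopologicalBasis 𝒰₁)
    (h₂ : IsTopologicalBasis 𝒰₂) :
    IsTopologicalBasis {S : Set (DMC ⇑f₁ ⇑f₂) |
        FormA f₁ f₂ 𝒰₀ 𝒰₁ S ∨ FormB f₁ f₂ 𝒰₀ S ∨ FormC f₁ f₂ 𝒰₀ 𝒰₂ S} ∧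
      ∀ S : Set (DMC ⇑f₁ ⇑f₂),
        FormA f₁ f₂ 𝒰₀ 𝒰₁ S ∨ FormB f₁ f₂ 𝒰₀ S ∨ FormC f₁ f₂ 𝒰₀ 𝒰₂ S → IsOpen S := by
  have hopen : ∀ S : Set (DMC ⇑f₁ ⇑f₂),
      FormA f₁ f₂ 𝒰₀ 𝒰₁ S ∨ FormB f₁ f₂ 𝒰₀ S ∨ FormC f₁ f₂ 𝒰₀ 𝒰₂ S → IsOpen S := by
    rintro S (⟨V, hV, ι, U, ε, hU, hUV, hε, rfl⟩ | ⟨U, hU, β, γ, hβ, hβγ, hγ, rfl⟩ |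
      ⟨V, hV, ι, U, ε, hU, hUV, hε, rfl⟩)
    · exact DMCAux.isOpenA ⇑f₁ ⇑f₂ (h₁.isOpen hV) (fun α => h₀.isOpen (hU α)) hUV hε
    · exact DMCAux.isOpenB ⇑f₁ ⇑f₂ (h₀.isOpen hU) hβ hγ
    · exact DMCAux.isOpenC ⇑f₁ ⇑f₂ (h₂.isOpen hV) (fun α => h₀.isOpen (hU α)) hUV hε
  refine ⟨isTopologicalBasis_of_isOpen_of_nhds (fun u hu => hopen u hu) ?_, hopen⟩
  intro a u ha hu
  obtain ⟨x₀, rfl⟩ := Quot.exists_rep a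
  match x₀ with
  | Sum.inl y =>
      obtain ⟨S, hS, hmem, hsub⟩ := existsA f₁ f₂ 𝒰₀ 𝒰₁ h₀ h₁ hu ha
      exact ⟨S, Or.inl hS, hmem, hsub⟩
  | Sum.inr (Sum.inr z) =>
      obtain ⟨S, hS, hmem, hsub⟩ := existsC f₁ f₂ 𝒰₀ 𝒰₂ h₀ h₂ hu ha
      exact ⟨S, Or.inr (Or.inr hS), hmem, hsub⟩
  | Sum.inr (Sum.inl (b, t)) =>
      by_cases h0 : t = 0
      · subst h0
        have he : dmcMk ⇑f₁ ⇑f₂ (Sum.inl (f₁ b)) = Quot.mk _ (Sum.inr (Sum.inl (b, 0))) :=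
          Quot.sound (Or.inl ⟨b, rfl, rfl⟩)
        rw [← he] at ha ⊢
        obtain ⟨S, hS, hmem, hsub⟩ := existsA f₁ f₂ 𝒰₀ 𝒰₁ h₀ h₁ hu ha
        exact ⟨S, Or.inl hS, hmem, hsub⟩
      · by_cases h1 : t = 1
        · subst h1
          have he : dmcMk ⇑f₁ ⇑f₂ (Sum.inr (Sum.inr (f₂ b)))
              = Quot.mk _ (Sum.inr (Sum.inl (b, 1))) :=
            Quot.sound (Or.inr ⟨b, rfl, rfl⟩)
          rw [← he] at ha ⊢
          obtain ⟨S, hS, hmem, hsub⟩ := existsC f₁ f₂ 𝒰₀ 𝒰₂ h₀ h₂ hu ha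
          exact ⟨S, Or.inr (Or.inr hS), hmem, hsub⟩
        · have ht0 : (0:I) < t := lt_of_le_of_ne unitInterval.nonneg' (Ne.symm h0)
          have ht1 : t < 1 := lt_of_le_of_ne unitInterval.le_one' h1
          obtain ⟨S, hS, hmem, hsub⟩ := existsB f₁ f₂ 𝒰₀ h₀ hu ht0 ht1 ha
          exact ⟨S, Or.inr (Or.inl hS), hmem, hsub⟩

end Basis
end

section
/- Let r : Y → X be a continuous map, let Z ⊆ U ⊆ X be subspaces, and suppose there are continuous homotopies h : U × [0,1] → U and H : r⁻¹(U) × [0,1] → r⁻¹(U) such that h(·,0) = id, H(·,0) = id, r(H(y,t)) = h(r(y),t) for all y ∈ r⁻¹(U) and t ∈ [0,1], h(Z × [0,1]) ⊆ Z, and h(U × {1}) ⊆ Z. Fix x ∈ U and define Φ : hofib_x(r|_U) → hofib_{h(x,1)}(r|_Z) by Φ(γ, y) = (s ↦ h(γ(s),1), H(y,1)). Then Φ is a well-defined continuous map and a homotopy equivalence. -/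
open unitInterval

section Defs

variable {Y X : Type} [TopologicalSpace Y] [TopologicalSpace X]

/-- The homotopy fiber of `r` over a subset `A ⊆ X`, as a subset of `C([0,1], X) × Y`. -/
def hoFiberSet (r : C(Y, X)) (A : Set X) : Set (C(I, X) × Y) :=
  {p | p.1 0 ∈ A ∧ p.1 1 = r p.2}

/-- The restriction `r|_S : r⁻¹(S) → S` of `r`. -/
def restrictMap (r : C(Y, X)) (S : Set X) : C(↥(r ⁻¹' S), ↥S) :=
  ⟨fun y => ⟨r y, y.2⟩, (r.continuous.comp continuous_subtype_val).subtype_mk _⟩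

/-- `f` is a homotopy equivalence. -/
def IsHomotopyEquiv {A B : Type} [TopologicalSpace A] [TopologicalSpace B] (f : C(A, B)) : Prop :=
  ∃ g : C(B, A),
    (g.comp f).Homotopic (ContinuousMap.id A) ∧ (f.comp g).Homotopic (ContinuousMap.id B)

end Defs


noncomputable section Main

open Set ContinuousMap

namespace Hofib13

def pj : ℝ → I := Set.projIcc 0 1 zero_le_one

lemma cont_pj : Continuous pj := continuous_projIcc

lemma pj_coe (t : I) : pj (t : ℝ) = t := by
  rw [pj, Set.projIcc_of_mem zero_le_one t.2]

lemma pj_zero : pj 0 = 0 := by simpa using pj_coe 0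

lemma pj_one : pj 1 = 1 := by simpa using pj_coe 1

def rfun : ℝ → ℝ := fun s => max (5 * s - 4) 0

lemma cont_rfun : Continuous rfun := by unfold rfun; fun_prop

lemma rfun_zero : rfun 0 = 0 := by norm_num [rfun]

lemma rfun_one : rfun 1 = 1 := by norm_num [rfun]

variable {Y' X' : Type} [TopologicalSpace Y'] [TopologicalSpace X']

def rcm : C(I, I) := ⟨fun s => pj (rfun s), cont_pj.comp (cont_rfun.comp continuous_subtype_val)⟩

/-- The reparametrization self-map of a homotopy fiber. -/
def rmap (m : C(Y', X')) (A : Set X') :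
    C(↥(hoFiberSet m A), ↥(hoFiberSet m A)) := by
  refine ⟨fun p => ⟨(p.val.1.comp rcm, p.val.2), ?_, ?_⟩, ?_⟩
  · show p.val.1 (rcm 0) ∈ A
    have : rcm 0 = 0 := by
      show pj (rfun ((0 : I) : ℝ)) = 0
      rw [show ((0:I):ℝ) = (0:ℝ) by norm_num, rfun_zero, pj_zero]
    rw [this]; exact p.2.1
  · show p.val.1 (rcm 1) = m p.val.2
    have : rcm 1 = 1 := by
      show pj (rfun ((1 : I) : ℝ)) = 1
      rw [show ((1:I):ℝ) = (1:ℝ) by norm_num, rfun_one, pj_one]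
    rw [this]; exact p.2.2
  · exact (((continuous_precomp rcm).comp
      (continuous_fst.comp continuous_subtype_val)).prodMk
      (continuous_snd.comp continuous_subtype_val)).subtype_mk _

/-- The big function underlying the homotopy from `rmap` to the identity. -/
def rbig (m : C(Y', X')) (A : Set X') : C((I × ↥(hoFiberSet m A)) × I, X') := by
  refine ⟨fun w => w.1.2.val.1 (pj ((1 - (w.1.1 : ℝ)) * rfun (w.2 : ℝ) + (w.1.1 : ℝ) * (w.2 : ℝ))), ?_⟩
  have h1 : Continuous fun w : (I × ↥(hoFiberSet m A)) × I => (w.1.2.val.1 : C(I, X')) :=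
    continuous_fst.comp (continuous_subtype_val.comp (continuous_snd.comp continuous_fst))
  have h2 : Continuous fun w : (I × ↥(hoFiberSet m A)) × I =>
      pj ((1 - (w.1.1 : ℝ)) * rfun (w.2 : ℝ) + (w.1.1 : ℝ) * (w.2 : ℝ)) := by
    apply cont_pj.comp
    have := cont_rfun
    fun_prop
  exact h1.eval h2

lemma rbig_apply (m : C(Y', X')) (A : Set X') (t : I) (p : ↥(hoFiberSet m A)) (s : I) :
    rbig m A ((t, p), s)
      = p.val.1 (pj ((1 - (t : ℝ)) * rfun (s : ℝ) + (t : ℝ) * (s : ℝ))) := rfl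

lemma rmap_homotopic (m : C(Y', X')) (A : Set X') :
    (rmap m A).Homotopic (ContinuousMap.id _) := by
  refine ⟨?_⟩
  refine { toContinuousMap := ⟨fun w => ⟨((rbig m A).curry w, w.2.val.2), ?_, ?_⟩, ?_⟩,
           map_zero_left := ?_, map_one_left := ?_ }
  · show rbig m A (w, 0) ∈ A
    have : pj ((1 - (w.1 : ℝ)) * rfun ((0:I) : ℝ) + (w.1 : ℝ) * ((0:I) : ℝ)) = 0 := by
      rw [show ((0:I):ℝ) = (0:ℝ) by norm_num, rfun_zero]
      norm_num [pj_zero]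
    show w.2.val.1 _ ∈ A
    rw [this]; exact w.2.2.1
  · show rbig m A (w, 1) = m w.2.val.2
    have : pj ((1 - (w.1 : ℝ)) * rfun ((1:I) : ℝ) + (w.1 : ℝ) * ((1:I) : ℝ)) = 1 := by
      rw [show ((1:I):ℝ) = (1:ℝ) by norm_num, rfun_one]
      norm_num [pj_one]
    show w.2.val.1 _ = m w.2.val.2
    rw [this]; exact w.2.2.2
  · exact (((rbig m A).curry.continuous).prodMk
      (continuous_snd.comp (continuous_subtype_val.comp continuous_snd))).subtype_mk _
  · intro p
    apply Subtype.ext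
    apply Prod.ext
    · ext s
      show rbig m A ((0, p), s) = (p.val.1.comp rcm) s
      rw [rbig_apply]
      show _ = p.val.1 (pj (rfun (s : ℝ)))
      norm_num
    · rfl
  · intro p
    apply Subtype.ext
    apply Prod.ext
    · ext s
      show rbig m A ((1, p), s) = p.val.1 s
      rw [rbig_apply]
      rw [show (1 - ((1:I) : ℝ)) * rfun (s:ℝ) + ((1:I):ℝ) * (s:ℝ) = (s:ℝ) by norm_num]
      rw [pj_coe]
    · rfl

end Hofib13

namespace Hofib13

open Set ContinuousMap

variable {Y X : Type} [TopologicalSpace Y] [TopologicalSpace X]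

structure Setup (Y X : Type) [TopologicalSpace Y] [TopologicalSpace X] where
  r : C(Y, X)
  Z : Set X
  U : Set X
  hZU : Z ⊆ U
  h : C(↥U × I, ↥U)
  H : C(↥(r ⁻¹' U) × I, ↥(r ⁻¹' U))
  hh0 : ∀ z : ↥U, h (z, 0) = z
  hH0 : ∀ y : ↥(r ⁻¹' U), H (y, 0) = y
  hcomm : ∀ (y : ↥(r ⁻¹' U)) (t : I),
      restrictMap r U (H (y, t)) = h (restrictMap r U y, t)
  hZstable : ∀ z : ↥U, (z : X) ∈ Z → ∀ t : I, ((h (z, t) : ↥U) : X) ∈ Z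
  hend : ∀ z : ↥U, ((h (z, 1) : ↥U) : X) ∈ Z
  x : ↥U

variable (S : Setup Y X)

def z1 : ↥S.Z := ⟨((S.h (S.x, 1) : ↥S.U) : X), S.hend S.x⟩

abbrev EA := ↥(hoFiberSet (restrictMap S.r S.U) ({S.x} : Set ↥S.U))

abbrev EB := ↥(hoFiberSet (restrictMap S.r S.Z) ({z1 S} : Set ↥S.Z))

def jmap (y : ↥(S.r ⁻¹' S.Z)) : ↥(S.r ⁻¹' S.U) := ⟨y.val, S.hZU y.2⟩

lemma memA_start (p : EA S) : p.val.1 0 = S.x := p.2.1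

lemma memA_end (p : EA S) : p.val.1 1 = restrictMap S.r S.U p.val.2 := p.2.2

lemma memB_start (p : EB S) : p.val.1 0 = z1 S := p.2.1

lemma memB_end (p : EB S) : p.val.1 1 = restrictMap S.r S.Z p.val.2 := p.2.2

/-- membership of the second component of Φ. -/
lemma phi_snd_mem (y : ↥(S.r ⁻¹' S.U)) : ((S.H (y, 1) : ↥(S.r ⁻¹' S.U)) : Y) ∈ S.r ⁻¹' S.Z := by
  show (restrictMap S.r S.U (S.H (y, 1))).val ∈ S.Z
  rw [congrArg Subtype.val (S.hcomm y 1)]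
  exact S.hend _

def PhiBig : C(EA S × I, ↥S.Z) := by
  refine ⟨fun w => ⟨((S.h (w.1.val.1 w.2, 1) : ↥S.U) : X), S.hend _⟩, ?_⟩
  refine Continuous.subtype_mk (continuous_subtype_val.comp (S.h.continuous.comp
    (Continuous.prodMk ?_ continuous_const))) _
  exact (continuous_fst.comp (continuous_subtype_val.comp continuous_fst)).eval continuous_snd

def PhiMap : C(EA S, EB S) := by
  refine ⟨fun p => ⟨((PhiBig S).curry p,
      ⟨(S.H (p.val.2, 1) : ↥(S.r ⁻¹' S.U)).val, phi_snd_mem S p.val.2⟩), ?_, ?_⟩, ?_⟩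
  · show (PhiBig S) (p, 0) ∈ ({z1 S} : Set ↥S.Z)
    apply Set.mem_singleton_iff.mpr
    apply Subtype.ext
    show ((S.h (p.val.1 0, 1) : ↥S.U) : X) = _
    rw [memA_start S p]
    rfl
  · show (PhiBig S) (p, 1) = restrictMap S.r S.Z _
    apply Subtype.ext
    show ((S.h (p.val.1 1, 1) : ↥S.U) : X) = S.r (S.H (p.val.2, 1)).val
    rw [memA_end S p]
    exact (congrArg Subtype.val (S.hcomm p.val.2 1)).symm
  · refine Continuous.subtype_mk (Continuous.prodMk (PhiBig S).curry.continuous ?_) _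
    refine Continuous.subtype_mk (continuous_subtype_val.comp (S.H.continuous.comp
      (Continuous.prodMk (continuous_snd.comp continuous_subtype_val) continuous_const))) _

/-- The path function for Ψ'. -/
def PsiFun : EB S × I → ↥S.U := fun w =>
  if ((w.2 : ℝ)) ≤ 1/5 then S.h (S.x, pj (5 * (w.2 : ℝ)))
  else if ((w.2 : ℝ)) ≤ 2/5 then S.h (S.x, 1)
  else if ((w.2 : ℝ)) ≤ 3/5 then S.h (S.h (S.x, 1), pj (5 * (w.2 : ℝ) - 2))
  else if ((w.2 : ℝ)) ≤ 4/5 then S.h (S.h (S.x, pj (4 - 5 * (w.2 : ℝ))), 1)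
  else ⟨(w.1.val.1 (pj (5 * (w.2 : ℝ) - 4)) : ↥S.Z).val,
    S.hZU (w.1.val.1 (pj (5 * (w.2 : ℝ) - 4))).2⟩

lemma cont_PsiFun : Continuous (PsiFun S) := by
  have hs : Continuous fun w : EB S × I => ((w.2 : I) : ℝ) :=
    continuous_subtype_val.comp continuous_snd
  have c1 : Continuous fun w : EB S × I => S.h (S.x, pj (5 * (w.2 : ℝ))) := by
    apply S.h.continuous.comp; apply Continuous.prodMk continuous_const
    exact cont_pj.comp (by fun_prop)
  have c2 : Continuous fun _ : EB S × I => S.h (S.x, 1) := continuous_const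
  have c3 : Continuous fun w : EB S × I => S.h (S.h (S.x, 1), pj (5 * (w.2 : ℝ) - 2)) := by
    apply S.h.continuous.comp; apply Continuous.prodMk continuous_const
    exact cont_pj.comp (by fun_prop)
  have c4 : Continuous fun w : EB S × I => S.h (S.h (S.x, pj (4 - 5 * (w.2 : ℝ))), 1) := by
    apply S.h.continuous.comp
    refine Continuous.prodMk (S.h.continuous.comp (Continuous.prodMk continuous_const
      (cont_pj.comp (by fun_prop)))) continuous_const
  have c5 : Continuous fun w : EB S × I =>
      (⟨(w.1.val.1 (pj (5 * (w.2 : ℝ) - 4)) : ↥S.Z).val,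
        S.hZU (w.1.val.1 (pj (5 * (w.2 : ℝ) - 4))).2⟩ : ↥S.U) := by
    refine Continuous.subtype_mk (continuous_subtype_val.comp ?_) _
    refine Continuous.eval ?_ (cont_pj.comp (by fun_prop))
    exact continuous_fst.comp (continuous_subtype_val.comp continuous_fst)
  have c45 : Continuous fun w : EB S × I =>
      if ((w.2 : ℝ)) ≤ 4/5 then S.h (S.h (S.x, pj (4 - 5 * (w.2 : ℝ))), 1)
      else ⟨(w.1.val.1 (pj (5 * (w.2 : ℝ) - 4)) : ↥S.Z).val,
        S.hZU (w.1.val.1 (pj (5 * (w.2 : ℝ) - 4))).2⟩ := by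
    refine Continuous.if_le c4 c5 hs continuous_const fun w hw => ?_
    apply Subtype.ext
    have h1 : pj (4 - 5 * (w.2 : ℝ)) = 0 := by rw [hw]; norm_num [pj_zero]
    have h2 : pj (5 * (w.2 : ℝ) - 4) = 0 := by rw [hw]; norm_num [pj_zero]
    rw [h1, h2]
    show ((S.h (S.h (S.x, 0), 1) : ↥S.U) : X) = _
    rw [S.hh0 S.x, memB_start S w.1]
    rfl
  have c35 : Continuous fun w : EB S × I =>
      if ((w.2 : ℝ)) ≤ 3/5 then S.h (S.h (S.x, 1), pj (5 * (w.2 : ℝ) - 2))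
      else if ((w.2 : ℝ)) ≤ 4/5 then S.h (S.h (S.x, pj (4 - 5 * (w.2 : ℝ))), 1)
      else ⟨(w.1.val.1 (pj (5 * (w.2 : ℝ) - 4)) : ↥S.Z).val,
        S.hZU (w.1.val.1 (pj (5 * (w.2 : ℝ) - 4))).2⟩ := by
    refine Continuous.if_le c3 c45 hs continuous_const fun w hw => ?_
    have hle : ((w.2 : ℝ)) ≤ 4/5 := by rw [hw]; norm_num
    rw [if_pos hle]
    have h1 : pj (5 * (w.2 : ℝ) - 2) = 1 := by rw [hw]; norm_num [pj_one]
    have h2 : pj (4 - 5 * (w.2 : ℝ)) = 1 := by rw [hw]; norm_num [pj_one]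
    rw [h1, h2]
  have c25 : Continuous fun w : EB S × I =>
      if ((w.2 : ℝ)) ≤ 2/5 then S.h (S.x, 1)
      else if ((w.2 : ℝ)) ≤ 3/5 then S.h (S.h (S.x, 1), pj (5 * (w.2 : ℝ) - 2))
      else if ((w.2 : ℝ)) ≤ 4/5 then S.h (S.h (S.x, pj (4 - 5 * (w.2 : ℝ))), 1)
      else ⟨(w.1.val.1 (pj (5 * (w.2 : ℝ) - 4)) : ↥S.Z).val,
        S.hZU (w.1.val.1 (pj (5 * (w.2 : ℝ) - 4))).2⟩ := by
    refine Continuous.if_le c2 c35 hs continuous_const fun w hw => ?_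
    have hle : ((w.2 : ℝ)) ≤ 3/5 := by rw [hw]; norm_num
    rw [if_pos hle]
    have h1 : pj (5 * (w.2 : ℝ) - 2) = 0 := by rw [hw]; norm_num [pj_zero]
    rw [h1, S.hh0]
  refine Continuous.if_le c1 c25 hs continuous_const fun w hw => ?_
  have hle : ((w.2 : ℝ)) ≤ 2/5 := by rw [hw]; norm_num
  rw [if_pos hle]
  have h1 : pj (5 * (w.2 : ℝ)) = 1 := by rw [hw]; norm_num [pj_one]
  rw [h1]

def PsiBig : C(EB S × I, ↥S.U) := ⟨_, cont_PsiFun S⟩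

def PsiMap : C(EB S, EA S) := by
  refine ⟨fun p => ⟨((PsiBig S).curry p, jmap S p.val.2), ?_, ?_⟩, ?_⟩
  · show PsiFun S (p, 0) ∈ ({S.x} : Set ↥S.U)
    apply Set.mem_singleton_iff.mpr
    show (if (((0:I) : ℝ)) ≤ 1/5 then S.h (S.x, pj (5 * ((0:I) : ℝ))) else _) = S.x
    rw [if_pos (by norm_num : (((0:I)) : ℝ) ≤ 1/5)]
    rw [show pj (5 * ((0:I) : ℝ)) = 0 by norm_num [pj_zero]]
    exact S.hh0 S.x
  · show PsiFun S (p, 1) = restrictMap S.r S.U _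
    unfold PsiFun
    rw [if_neg (by norm_num : ¬ (((1:I)) : ℝ) ≤ 1/5), if_neg (by norm_num : ¬ (((1:I)) : ℝ) ≤ 2/5),
      if_neg (by norm_num : ¬ (((1:I)) : ℝ) ≤ 3/5), if_neg (by norm_num : ¬ (((1:I)) : ℝ) ≤ 4/5)]
    apply Subtype.ext
    show (p.val.1 (pj (5 * ((1:I) : ℝ) - 4))).val = S.r (jmap S p.val.2).val
    rw [show pj (5 * ((1:I) : ℝ) - 4) = 1 by norm_num [pj_one], memB_end S p]
    rfl
  · refine Continuous.subtype_mk (Continuous.prodMk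
      (PsiBig S).curry.continuous ?_) _
    exact Continuous.subtype_mk (continuous_subtype_val.comp
      (continuous_snd.comp continuous_subtype_val)) _

end Hofib13

namespace Hofib13

open Set ContinuousMap

variable {Y X : Type} [TopologicalSpace Y] [TopologicalSpace X] (S : Setup Y X)

def dd1 : ℝ → ℝ := fun v => min (5 * v) (min 1 (4 - 5 * v))
def dd2 : ℝ → ℝ := fun v => max 0 (min (5 * v - 2) 1)

lemma cont_dd1 : Continuous dd1 := by unfold dd1; fun_prop
lemma cont_dd2 : Continuous dd2 := by unfold dd2; fun_prop

/-- the underlying function of the homotopy from `rmap` to `Ψ' ∘ Φ` on `EA`. -/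
def GbFun : (I × EA S) × I → ↥S.U := fun w =>
  if ((w.2 : ℝ)) ≤ 4/5 then
    S.h (S.h (S.x, pj ((w.1.1 : ℝ) * dd1 (w.2 : ℝ))), pj ((w.1.1 : ℝ) * dd2 (w.2 : ℝ)))
  else S.h (w.1.2.val.1 (pj (5 * (w.2 : ℝ) - 4)), w.1.1)

lemma cont_GbFun : Continuous (GbFun S) := by
  have hs : Continuous fun w : (I × EA S) × I => ((w.2 : I) : ℝ) :=
    continuous_subtype_val.comp continuous_snd
  have ht : Continuous fun w : (I × EA S) × I => ((w.1.1 : I) : ℝ) :=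
    continuous_subtype_val.comp (continuous_fst.comp continuous_fst)
  have c1 : Continuous fun w : (I × EA S) × I =>
      S.h (S.h (S.x, pj ((w.1.1 : ℝ) * dd1 (w.2 : ℝ))), pj ((w.1.1 : ℝ) * dd2 (w.2 : ℝ))) := by
    have := cont_dd1; have := cont_dd2
    apply S.h.continuous.comp
    refine Continuous.prodMk (S.h.continuous.comp (Continuous.prodMk continuous_const
      (cont_pj.comp (by fun_prop)))) (cont_pj.comp (by fun_prop))
  have c2 : Continuous fun w : (I × EA S) × I =>
      S.h (w.1.2.val.1 (pj (5 * (w.2 : ℝ) - 4)), w.1.1) := by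
    apply S.h.continuous.comp
    refine Continuous.prodMk (Continuous.eval ?_ (cont_pj.comp (by fun_prop)))
      (continuous_fst.comp continuous_fst)
    exact continuous_fst.comp (continuous_subtype_val.comp (continuous_snd.comp continuous_fst))
  refine Continuous.if_le c1 c2 hs continuous_const fun w hw => ?_
  have h1 : dd1 (w.2 : ℝ) = 0 := by rw [hw]; norm_num [dd1]
  have h2 : dd2 (w.2 : ℝ) = 1 := by rw [hw]; norm_num [dd2]
  have h3 : pj (5 * (w.2 : ℝ) - 4) = 0 := by rw [hw]; norm_num [pj_zero]
  rw [h1, h2, h3, mul_zero, mul_one, pj_zero, S.hh0, pj_coe, memA_start S w.1.2]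

lemma GbFun_apply (t : I) (p : EA S) (s : I) : GbFun S ((t, p), s) =
    if ((s : ℝ)) ≤ 4/5 then
      S.h (S.h (S.x, pj ((t : ℝ) * dd1 (s : ℝ))), pj ((t : ℝ) * dd2 (s : ℝ)))
    else S.h (p.val.1 (pj (5 * (s : ℝ) - 4)), t) := rfl

def GbBig : C((I × EA S) × I, ↥S.U) := ⟨GbFun S, cont_GbFun S⟩

def GbCM : C(I × EA S, EA S) := by
  refine ⟨fun w => ⟨((GbBig S).curry w, S.H (w.2.val.2, w.1)), ?_, ?_⟩, ?_⟩
  · show GbFun S (w, 0) ∈ ({S.x} : Set ↥S.U)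
    apply Set.mem_singleton_iff.mpr
    show (if (((0:I)) : ℝ) ≤ 4/5 then _ else _) = S.x
    rw [if_pos (by norm_num : (((0:I)) : ℝ) ≤ 4/5)]
    rw [show dd1 ((0:I) : ℝ) = 0 by norm_num [dd1], show dd2 ((0:I) : ℝ) = 0 by norm_num [dd2]]
    rw [mul_zero, pj_zero, S.hh0, S.hh0]
  · show GbFun S (w, 1) = restrictMap S.r S.U (S.H (w.2.val.2, w.1))
    show (if (((1:I)) : ℝ) ≤ 4/5 then _ else _) = _
    rw [if_neg (by norm_num : ¬ (((1:I)) : ℝ) ≤ 4/5)]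
    rw [show pj (5 * ((1:I) : ℝ) - 4) = 1 by norm_num [pj_one], memA_end S w.2]
    exact (S.hcomm w.2.val.2 w.1).symm
  · refine Continuous.subtype_mk (Continuous.prodMk
      (ContinuousMap.curry _).continuous ?_) _
    exact S.H.continuous.comp (Continuous.prodMk
      (continuous_snd.comp (continuous_subtype_val.comp continuous_snd)) continuous_fst)

def GbHom : ((rmap (restrictMap S.r S.U) ({S.x} : Set ↥S.U)).Homotopy
    ((PsiMap S).comp (PhiMap S))) := by
  refine { toContinuousMap := GbCM S, map_zero_left := ?_, map_one_left := ?_ }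
  · intro p
    apply Subtype.ext
    apply Prod.ext
    · ext s
      have key : GbFun S ((0, p), s) = (p.val.1.comp rcm) s := by
        rw [GbFun_apply]
        show _ = p.val.1 (pj (rfun (s : ℝ)))
        split_ifs with hc
        · rw [show ((0:I) : ℝ) = (0:ℝ) by norm_num, zero_mul, zero_mul, pj_zero, S.hh0, S.hh0]
          rw [show rfun (s:ℝ) = 0 by
            simp only [rfun]; rw [max_eq_right]; linarith, pj_zero]
          exact (memA_start S p).symm
        · rw [show pj (5 * (s:ℝ) - 4) = pj (rfun (s:ℝ)) by
            rw [show rfun (s:ℝ) = 5 * (s:ℝ) - 4 by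
              simp only [rfun]; rw [max_eq_left]; push_neg at hc; linarith]]
          exact S.hh0 _
      exact congrArg Subtype.val key
    · exact S.hH0 _
  · intro p
    apply Subtype.ext
    apply Prod.ext
    · ext s
      have key : GbFun S ((1, p), s) = PsiFun S (PhiMap S p, s) := by
        rw [GbFun_apply]
        rw [show ((1:I) : ℝ) = (1:ℝ) by norm_num, one_mul, one_mul]
        unfold PsiFun
        by_cases h1 : ((s:I) : ℝ) ≤ 1/5
        · rw [if_pos (by linarith : ((s:I) : ℝ) ≤ 4/5), if_pos h1]
          rw [show dd1 (s:ℝ) = 5 * (s:ℝ) by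
            simp only [dd1]; rw [min_eq_left (le_min (by linarith) (by linarith))]]
          rw [show dd2 (s:ℝ) = 0 by
            simp only [dd2]; rw [max_eq_left (le_trans (min_le_left _ _) (by linarith))]]
          rw [pj_zero, S.hh0]
        by_cases h2 : ((s:I) : ℝ) ≤ 2/5
        · rw [if_pos (by linarith : ((s:I) : ℝ) ≤ 4/5), if_neg h1, if_pos h2]
          rw [show dd1 (s:ℝ) = 1 by
            simp only [dd1]
            rw [min_eq_left (by linarith : (1:ℝ) ≤ 4 - 5 * (s:ℝ)),
              min_eq_right (by linarith : (1:ℝ) ≤ 5 * (s:ℝ))]]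
          rw [show dd2 (s:ℝ) = 0 by
            simp only [dd2]; rw [max_eq_left (le_trans (min_le_left _ _) (by linarith))]]
          rw [pj_zero, pj_one, S.hh0]
        by_cases h3 : ((s:I) : ℝ) ≤ 3/5
        · rw [if_pos (by linarith : ((s:I) : ℝ) ≤ 4/5), if_neg h1, if_neg h2, if_pos h3]
          rw [show dd1 (s:ℝ) = 1 by
            simp only [dd1]
            rw [min_eq_left (by linarith : (1:ℝ) ≤ 4 - 5 * (s:ℝ)),
              min_eq_right (by linarith : (1:ℝ) ≤ 5 * (s:ℝ))]]
          rw [show dd2 (s:ℝ) = 5 * (s:ℝ) - 2 by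
            simp only [dd2]
            rw [min_eq_left (by linarith : 5 * (s:ℝ) - 2 ≤ 1),
              max_eq_right (by linarith : (0:ℝ) ≤ 5 * (s:ℝ) - 2)]]
          rw [pj_one]
        by_cases h4 : ((s:I) : ℝ) ≤ 4/5
        · rw [if_pos h4, if_neg h1, if_neg h2, if_neg h3, if_pos h4]
          rw [show dd1 (s:ℝ) = 4 - 5 * (s:ℝ) by
            simp only [dd1]
            rw [min_eq_right (by linarith : 4 - 5 * (s:ℝ) ≤ 1),
              min_eq_right (by linarith : 4 - 5 * (s:ℝ) ≤ 5 * (s:ℝ))]]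
          rw [show dd2 (s:ℝ) = 1 by
            simp only [dd2]
            rw [min_eq_right (by linarith : (1:ℝ) ≤ 5 * (s:ℝ) - 2),
              max_eq_right (by norm_num : (0:ℝ) ≤ (1:ℝ))]]
          rw [pj_one]
        · rw [if_neg h4, if_neg h1, if_neg h2, if_neg h3, if_neg h4]
          apply Subtype.ext
          rfl
      exact congrArg Subtype.val key
    · exact Subtype.ext rfl

end Hofib13

namespace Hofib13

open Set ContinuousMap

variable {Y X : Type} [TopologicalSpace Y] [TopologicalSpace X] (S : Setup Y X)

/-- the retraceable prefix `w` (as a function of a real parameter). -/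
def WZfun : ℝ → ↥S.Z := fun v =>
  if v ≤ 1/5 then ⟨(S.h (S.h (S.x, pj (5 * v)), 1)).val, S.hend _⟩
  else ⟨(S.h (S.h (S.x, 1), pj (2 - 5 * v))).val, S.hZstable _ (S.hend S.x) _⟩

lemma cont_WZfun : Continuous (WZfun S) := by
  refine Continuous.if_le ?_ ?_ continuous_id continuous_const fun v hv => ?_
  · refine Continuous.subtype_mk (continuous_subtype_val.comp (S.h.continuous.comp
      (Continuous.prodMk (S.h.continuous.comp (Continuous.prodMk continuous_const
        (cont_pj.comp (by fun_prop)))) continuous_const))) _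
  · refine Continuous.subtype_mk (continuous_subtype_val.comp (S.h.continuous.comp
      (Continuous.prodMk continuous_const (cont_pj.comp (by fun_prop))))) _
  · apply Subtype.ext
    show (S.h (S.h (S.x, pj (5 * v)), 1)).val = (S.h (S.h (S.x, 1), pj (2 - 5 * v))).val
    rw [hv]
    rw [show pj (5 * (1/5 : ℝ)) = 1 by norm_num [pj_one]]
    rw [show pj (2 - 5 * (1/5 : ℝ)) = 1 by norm_num [pj_one]]

lemma WZfun_zero : WZfun S 0 = z1 S := by
  apply Subtype.ext
  show (if (0:ℝ) ≤ 1/5 then _ else _ : ↥S.Z).val = _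
  rw [if_pos (by norm_num : (0:ℝ) ≤ 1/5)]
  show (S.h (S.h (S.x, pj (5 * 0)), 1)).val = _
  rw [show pj (5 * (0:ℝ)) = 0 by norm_num [pj_zero], S.hh0]
  rfl

/-- the middle map of chain (a): retraceable prefix followed by the path. -/
def M1Fun : EB S × I → ↥S.Z := fun w =>
  if ((w.2 : ℝ)) ≤ 4/5 then WZfun S (min (w.2 : ℝ) (4/5 - (w.2 : ℝ)))
  else w.1.val.1 (pj (5 * (w.2 : ℝ) - 4))

lemma cont_M1Fun : Continuous (M1Fun S) := by
  have hs : Continuous fun w : EB S × I => ((w.2 : I) : ℝ) :=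
    continuous_subtype_val.comp continuous_snd
  refine Continuous.if_le ((cont_WZfun S).comp (by fun_prop)) ?_ hs continuous_const
    fun w hw => ?_
  · refine Continuous.eval (continuous_fst.comp continuous_subtype_val |>.comp continuous_fst)
      (cont_pj.comp (by fun_prop))
  · rw [hw, show min (4/5 : ℝ) (4/5 - 4/5) = 0 by norm_num, WZfun_zero]
    rw [show pj (5 * (4/5 : ℝ) - 4) = 0 by norm_num [pj_zero], memB_start S w.1]

def M1Big : C(EB S × I, ↥S.Z) := ⟨M1Fun S, cont_M1Fun S⟩

def M1Map : C(EB S, EB S) := by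
  refine ⟨fun p => ⟨((M1Big S).curry p, p.val.2), ?_, ?_⟩, ?_⟩
  · show M1Fun S (p, 0) ∈ ({z1 S} : Set ↥S.Z)
    apply Set.mem_singleton_iff.mpr
    show (if (((0:I)) : ℝ) ≤ 4/5 then _ else _) = z1 S
    rw [if_pos (by norm_num : (((0:I)) : ℝ) ≤ 4/5)]
    rw [show min (((0:I)) : ℝ) (4/5 - (((0:I)) : ℝ)) = 0 by norm_num, WZfun_zero]
  · show M1Fun S (p, 1) = restrictMap S.r S.Z p.val.2
    show (if (((1:I)) : ℝ) ≤ 4/5 then _ else _) = _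
    rw [if_neg (by norm_num : ¬ (((1:I)) : ℝ) ≤ 4/5)]
    rw [show pj (5 * (((1:I)) : ℝ) - 4) = 1 by norm_num [pj_one]]
    exact memB_end S p
  · exact ((M1Big S).curry.continuous.prodMk
      (continuous_snd.comp continuous_subtype_val)).subtype_mk _

/-- the membership lemma for the second components along chain (a). -/
lemma H1snd_mem (y : ↥(S.r ⁻¹' S.Z)) (t : I) : (S.H (jmap S y, t)).val ∈ S.r ⁻¹' S.Z := by
  have e : S.r ((S.H (jmap S y, t)).val) = (S.h (restrictMap S.r S.U (jmap S y), t)).val :=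
    congrArg Subtype.val (S.hcomm (jmap S y) t)
  show S.r ((S.H (jmap S y, t)).val) ∈ S.Z
  rw [e]
  exact S.hZstable _ (show S.r y.val ∈ S.Z from y.2) t

/-- the underlying function of the first homotopy of chain (a). -/
def H1Fun : (I × EB S) × I → ↥S.Z := fun w =>
  if ((w.2 : ℝ)) ≤ 1/5 then ⟨(S.h (S.h (S.x, pj (5 * (w.2 : ℝ))), 1)).val, S.hend _⟩
  else if ((w.2 : ℝ)) ≤ 2/5 then
    ⟨(S.h (S.h (S.x, 1), pj (1 - (1 - (w.1.1 : ℝ)) * (5 * (w.2 : ℝ) - 1)))).val,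
      S.hZstable _ (S.hend S.x) _⟩
  else if ((w.2 : ℝ)) ≤ 3/5 then
    ⟨(S.h (S.h (S.h (S.x, 1), pj (5 * (w.2 : ℝ) - 2)), w.1.1)).val,
      S.hZstable _ (S.hZstable _ (S.hend S.x) _) _⟩
  else if ((w.2 : ℝ)) ≤ 4/5 then
    ⟨(S.h (S.h (S.h (S.x, pj (4 - 5 * (w.2 : ℝ))), 1), w.1.1)).val,
      S.hZstable _ (S.hend _) _⟩
  else
    ⟨(S.h (⟨(w.1.2.val.1 (pj (5 * (w.2 : ℝ) - 4))).val,
        S.hZU (w.1.2.val.1 (pj (5 * (w.2 : ℝ) - 4))).2⟩, w.1.1)).val,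
      S.hZstable _ (w.1.2.val.1 (pj (5 * (w.2 : ℝ) - 4))).2 _⟩

lemma H1Fun_apply (t : I) (p : EB S) (s : I) : H1Fun S ((t, p), s) =
    if ((s : ℝ)) ≤ 1/5 then ⟨(S.h (S.h (S.x, pj (5 * (s : ℝ))), 1)).val, S.hend _⟩
    else if ((s : ℝ)) ≤ 2/5 then
      ⟨(S.h (S.h (S.x, 1), pj (1 - (1 - (t : ℝ)) * (5 * (s : ℝ) - 1)))).val,
        S.hZstable _ (S.hend S.x) _⟩
    else if ((s : ℝ)) ≤ 3/5 then
      ⟨(S.h (S.h (S.h (S.x, 1), pj (5 * (s : ℝ) - 2)), t)).val,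
        S.hZstable _ (S.hZstable _ (S.hend S.x) _) _⟩
    else if ((s : ℝ)) ≤ 4/5 then
      ⟨(S.h (S.h (S.h (S.x, pj (4 - 5 * (s : ℝ))), 1), t)).val,
        S.hZstable _ (S.hend _) _⟩
    else
      ⟨(S.h (⟨(p.val.1 (pj (5 * (s : ℝ) - 4))).val,
          S.hZU (p.val.1 (pj (5 * (s : ℝ) - 4))).2⟩, t)).val,
        S.hZstable _ (p.val.1 (pj (5 * (s : ℝ) - 4))).2 _⟩ := rfl

lemma cont_H1Fun : Continuous (H1Fun S) := by
  have hs : Continuous fun w : (I × EB S) × I => ((w.2 : I) : ℝ) :=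
    continuous_subtype_val.comp continuous_snd
  have ht : Continuous fun w : (I × EB S) × I => (w.1.1 : I) :=
    continuous_fst.comp continuous_fst
  have htr : Continuous fun w : (I × EB S) × I => ((w.1.1 : I) : ℝ) :=
    continuous_subtype_val.comp ht
  have c1 : Continuous fun w : (I × EB S) × I =>
      (⟨(S.h (S.h (S.x, pj (5 * (w.2 : ℝ))), 1)).val, S.hend _⟩ : ↥S.Z) := by
    refine Continuous.subtype_mk (continuous_subtype_val.comp (S.h.continuous.comp
      (Continuous.prodMk (S.h.continuous.comp (Continuous.prodMk continuous_const
        (cont_pj.comp (by fun_prop)))) continuous_const))) _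
  have c2 : Continuous fun w : (I × EB S) × I =>
      (⟨(S.h (S.h (S.x, 1), pj (1 - (1 - (w.1.1 : ℝ)) * (5 * (w.2 : ℝ) - 1)))).val,
        S.hZstable _ (S.hend S.x) _⟩ : ↥S.Z) := by
    refine Continuous.subtype_mk (continuous_subtype_val.comp (S.h.continuous.comp
      (Continuous.prodMk continuous_const (cont_pj.comp (by fun_prop))))) _
  have c3 : Continuous fun w : (I × EB S) × I =>
      (⟨(S.h (S.h (S.h (S.x, 1), pj (5 * (w.2 : ℝ) - 2)), w.1.1)).val,
        S.hZstable _ (S.hZstable _ (S.hend S.x) _) _⟩ : ↥S.Z) := by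
    refine Continuous.subtype_mk (continuous_subtype_val.comp (S.h.continuous.comp
      (Continuous.prodMk (S.h.continuous.comp (Continuous.prodMk continuous_const
        (cont_pj.comp (by fun_prop)))) ht))) _
  have c4 : Continuous fun w : (I × EB S) × I =>
      (⟨(S.h (S.h (S.h (S.x, pj (4 - 5 * (w.2 : ℝ))), 1), w.1.1)).val,
        S.hZstable _ (S.hend _) _⟩ : ↥S.Z) := by
    refine Continuous.subtype_mk (continuous_subtype_val.comp (S.h.continuous.comp
      (Continuous.prodMk (S.h.continuous.comp (Continuous.prodMk
        (S.h.continuous.comp (Continuous.prodMk continuous_const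
          (cont_pj.comp (by fun_prop)))) continuous_const)) ht))) _
  have c5 : Continuous fun w : (I × EB S) × I =>
      (⟨(S.h (⟨(w.1.2.val.1 (pj (5 * (w.2 : ℝ) - 4))).val,
          S.hZU (w.1.2.val.1 (pj (5 * (w.2 : ℝ) - 4))).2⟩, w.1.1)).val,
        S.hZstable _ (w.1.2.val.1 (pj (5 * (w.2 : ℝ) - 4))).2 _⟩ : ↥S.Z) := by
    have hg : Continuous fun w : (I × EB S) × I =>
        w.1.2.val.1 (pj (5 * (w.2 : ℝ) - 4)) := by
      refine Continuous.eval ?_ (cont_pj.comp (by fun_prop))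
      exact continuous_fst.comp (continuous_subtype_val.comp
        (continuous_snd.comp continuous_fst))
    refine Continuous.subtype_mk (continuous_subtype_val.comp (S.h.continuous.comp
      (Continuous.prodMk (Continuous.subtype_mk (continuous_subtype_val.comp hg) _) ht))) _
  have c45 : Continuous fun w : (I × EB S) × I =>
      if ((w.2 : ℝ)) ≤ 4/5 then
        (⟨(S.h (S.h (S.h (S.x, pj (4 - 5 * (w.2 : ℝ))), 1), w.1.1)).val,
          S.hZstable _ (S.hend _) _⟩ : ↥S.Z)
      else ⟨(S.h (⟨(w.1.2.val.1 (pj (5 * (w.2 : ℝ) - 4))).val,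
          S.hZU (w.1.2.val.1 (pj (5 * (w.2 : ℝ) - 4))).2⟩, w.1.1)).val,
        S.hZstable _ (w.1.2.val.1 (pj (5 * (w.2 : ℝ) - 4))).2 _⟩ := by
    refine Continuous.if_le c4 c5 hs continuous_const fun w hw => ?_
    apply Subtype.ext
    show (S.h (S.h (S.h (S.x, pj (4 - 5 * (w.2 : ℝ))), 1), w.1.1)).val = _
    have e1 : (S.h (S.h (S.x, pj (4 - 5 * (w.2 : ℝ))), 1) : ↥S.U)
        = ⟨(w.1.2.val.1 (pj (5 * (w.2 : ℝ) - 4))).val,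
            S.hZU (w.1.2.val.1 (pj (5 * (w.2 : ℝ) - 4))).2⟩ := by
      apply Subtype.ext
      rw [hw, show pj (4 - 5 * (4/5 : ℝ)) = 0 by norm_num [pj_zero], S.hh0]
      rw [show pj (5 * (4/5 : ℝ) - 4) = 0 by norm_num [pj_zero], memB_start S w.1.2]
      rfl
    rw [e1]
  have c35 : Continuous fun w : (I × EB S) × I =>
      if ((w.2 : ℝ)) ≤ 3/5 then
        (⟨(S.h (S.h (S.h (S.x, 1), pj (5 * (w.2 : ℝ) - 2)), w.1.1)).val,
          S.hZstable _ (S.hZstable _ (S.hend S.x) _) _⟩ : ↥S.Z)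
      else if ((w.2 : ℝ)) ≤ 4/5 then
        ⟨(S.h (S.h (S.h (S.x, pj (4 - 5 * (w.2 : ℝ))), 1), w.1.1)).val,
          S.hZstable _ (S.hend _) _⟩
      else ⟨(S.h (⟨(w.1.2.val.1 (pj (5 * (w.2 : ℝ) - 4))).val,
          S.hZU (w.1.2.val.1 (pj (5 * (w.2 : ℝ) - 4))).2⟩, w.1.1)).val,
        S.hZstable _ (w.1.2.val.1 (pj (5 * (w.2 : ℝ) - 4))).2 _⟩ := by
    refine Continuous.if_le c3 c45 hs continuous_const fun w hw => ?_
    rw [if_pos (by rw [hw]; norm_num : ((w.2 : I) : ℝ) ≤ 4/5)]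
    apply Subtype.ext
    show (S.h (S.h (S.h (S.x, 1), pj (5 * (w.2 : ℝ) - 2)), w.1.1)).val
      = (S.h (S.h (S.h (S.x, pj (4 - 5 * (w.2 : ℝ))), 1), w.1.1)).val
    rw [hw, show pj (5 * (3/5 : ℝ) - 2) = 1 by norm_num [pj_one],
      show pj (4 - 5 * (3/5 : ℝ)) = 1 by norm_num [pj_one]]
  have c25 : Continuous fun w : (I × EB S) × I =>
      if ((w.2 : ℝ)) ≤ 2/5 then
        (⟨(S.h (S.h (S.x, 1), pj (1 - (1 - (w.1.1 : ℝ)) * (5 * (w.2 : ℝ) - 1)))).val,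
          S.hZstable _ (S.hend S.x) _⟩ : ↥S.Z)
      else if ((w.2 : ℝ)) ≤ 3/5 then
        ⟨(S.h (S.h (S.h (S.x, 1), pj (5 * (w.2 : ℝ) - 2)), w.1.1)).val,
          S.hZstable _ (S.hZstable _ (S.hend S.x) _) _⟩
      else if ((w.2 : ℝ)) ≤ 4/5 then
        ⟨(S.h (S.h (S.h (S.x, pj (4 - 5 * (w.2 : ℝ))), 1), w.1.1)).val,
          S.hZstable _ (S.hend _) _⟩
      else ⟨(S.h (⟨(w.1.2.val.1 (pj (5 * (w.2 : ℝ) - 4))).val,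
          S.hZU (w.1.2.val.1 (pj (5 * (w.2 : ℝ) - 4))).2⟩, w.1.1)).val,
        S.hZstable _ (w.1.2.val.1 (pj (5 * (w.2 : ℝ) - 4))).2 _⟩ := by
    refine Continuous.if_le c2 c35 hs continuous_const fun w hw => ?_
    rw [if_pos (by rw [hw]; norm_num : ((w.2 : I) : ℝ) ≤ 3/5)]
    apply Subtype.ext
    show (S.h (S.h (S.x, 1), pj (1 - (1 - (w.1.1 : ℝ)) * (5 * (w.2 : ℝ) - 1)))).val
      = (S.h (S.h (S.h (S.x, 1), pj (5 * (w.2 : ℝ) - 2)), w.1.1)).val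
    rw [hw]
    rw [show (1 - (1 - (w.1.1 : ℝ)) * (5 * (2/5 : ℝ) - 1)) = ((w.1.1 : I) : ℝ) by ring]
    rw [pj_coe, show pj (5 * (2/5 : ℝ) - 2) = 0 by norm_num [pj_zero], S.hh0]
  show Continuous fun w : (I × EB S) × I =>
    if ((w.2 : ℝ)) ≤ 1/5 then
      (⟨(S.h (S.h (S.x, pj (5 * (w.2 : ℝ))), 1)).val, S.hend _⟩ : ↥S.Z)
    else if ((w.2 : ℝ)) ≤ 2/5 then
      ⟨(S.h (S.h (S.x, 1), pj (1 - (1 - (w.1.1 : ℝ)) * (5 * (w.2 : ℝ) - 1)))).val,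
        S.hZstable _ (S.hend S.x) _⟩
    else if ((w.2 : ℝ)) ≤ 3/5 then
      ⟨(S.h (S.h (S.h (S.x, 1), pj (5 * (w.2 : ℝ) - 2)), w.1.1)).val,
        S.hZstable _ (S.hZstable _ (S.hend S.x) _) _⟩
    else if ((w.2 : ℝ)) ≤ 4/5 then
      ⟨(S.h (S.h (S.h (S.x, pj (4 - 5 * (w.2 : ℝ))), 1), w.1.1)).val,
        S.hZstable _ (S.hend _) _⟩
    else ⟨(S.h (⟨(w.1.2.val.1 (pj (5 * (w.2 : ℝ) - 4))).val,
        S.hZU (w.1.2.val.1 (pj (5 * (w.2 : ℝ) - 4))).2⟩, w.1.1)).val,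
      S.hZstable _ (w.1.2.val.1 (pj (5 * (w.2 : ℝ) - 4))).2 _⟩
  refine Continuous.if_le c1 c25 hs continuous_const fun w hw => ?_
  rw [if_pos (by rw [hw]; norm_num : ((w.2 : I) : ℝ) ≤ 2/5)]
  apply Subtype.ext
  show (S.h (S.h (S.x, pj (5 * (w.2 : ℝ))), 1)).val
    = (S.h (S.h (S.x, 1), pj (1 - (1 - (w.1.1 : ℝ)) * (5 * (w.2 : ℝ) - 1)))).val
  rw [hw, show pj (5 * (1/5 : ℝ)) = 1 by norm_num [pj_one],
    show (1 - (1 - (w.1.1 : ℝ)) * (5 * (1/5 : ℝ) - 1)) = (1:ℝ) by ring, pj_one]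

def H1Big : C((I × EB S) × I, ↥S.Z) := ⟨H1Fun S, cont_H1Fun S⟩

def H1CM : C(I × EB S, EB S) := by
  refine ⟨fun w => ⟨((H1Big S).curry w, ⟨(S.H (jmap S w.2.val.2, w.1)).val,
    H1snd_mem S w.2.val.2 w.1⟩), ?_, ?_⟩, ?_⟩
  · show H1Fun S (w, 0) ∈ ({z1 S} : Set ↥S.Z)
    apply Set.mem_singleton_iff.mpr
    rw [H1Fun_apply, if_pos (by norm_num : (((0:I)) : ℝ) ≤ 1/5)]
    apply Subtype.ext
    show (S.h (S.h (S.x, pj (5 * (((0:I)) : ℝ))), 1)).val = _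
    rw [show pj (5 * (((0:I)) : ℝ)) = 0 by norm_num [pj_zero], S.hh0]
    rfl
  · show H1Fun S (w, 1) = restrictMap S.r S.Z _
    rw [H1Fun_apply, if_neg (by norm_num : ¬ (((1:I)) : ℝ) ≤ 1/5),
      if_neg (by norm_num : ¬ (((1:I)) : ℝ) ≤ 2/5),
      if_neg (by norm_num : ¬ (((1:I)) : ℝ) ≤ 3/5),
      if_neg (by norm_num : ¬ (((1:I)) : ℝ) ≤ 4/5)]
    apply Subtype.ext
    show (S.h (⟨(w.2.val.1 (pj (5 * (((1:I)) : ℝ) - 4))).val, _⟩, w.1)).val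
      = S.r (S.H (jmap S w.2.val.2, w.1)).val
    have e1 : (⟨(w.2.val.1 (pj (5 * (((1:I)) : ℝ) - 4))).val,
        S.hZU (w.2.val.1 (pj (5 * (((1:I)) : ℝ) - 4))).2⟩ : ↥S.U)
        = restrictMap S.r S.U (jmap S w.2.val.2) := by
      apply Subtype.ext
      show (w.2.val.1 (pj (5 * (((1:I)) : ℝ) - 4))).val = _
      rw [show pj (5 * (((1:I)) : ℝ) - 4) = 1 by norm_num [pj_one], memB_end S w.2]
      rfl
    rw [e1, ← S.hcomm (jmap S w.2.val.2) w.1]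
    rfl
  · refine Continuous.subtype_mk (Continuous.prodMk (H1Big S).curry.continuous ?_) _
    refine Continuous.subtype_mk (continuous_subtype_val.comp (S.H.continuous.comp
      (Continuous.prodMk (Continuous.subtype_mk ?_ _) continuous_fst))) _
    exact continuous_subtype_val.comp
      (continuous_snd.comp (continuous_subtype_val.comp continuous_snd))

end Hofib13

namespace Hofib13

open Set ContinuousMap

variable {Y X : Type} [TopologicalSpace Y] [TopologicalSpace X] (S : Setup Y X)

lemma WZfun_apply (v : ℝ) : WZfun S v =
    if v ≤ 1/5 then ⟨(S.h (S.h (S.x, pj (5 * v)), 1)).val, S.hend _⟩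
    else ⟨(S.h (S.h (S.x, 1), pj (2 - 5 * v))).val, S.hZstable _ (S.hend S.x) _⟩ := rfl

lemma M1Fun_apply (p : EB S) (s : I) : M1Fun S (p, s) =
    if ((s : ℝ)) ≤ 4/5 then WZfun S (min (s : ℝ) (4/5 - (s : ℝ)))
    else p.val.1 (pj (5 * (s : ℝ) - 4)) := rfl

def H1Hom : (M1Map S).Homotopy ((PhiMap S).comp (PsiMap S)) := by
  refine { toContinuousMap := H1CM S, map_zero_left := ?_, map_one_left := ?_ }
  · intro p
    apply Subtype.ext
    apply Prod.ext
    · ext s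
      have key : H1Fun S ((0, p), s) = M1Fun S (p, s) := by
        rw [H1Fun_apply, M1Fun_apply]
        by_cases h1 : ((s:I) : ℝ) ≤ 1/5
        · rw [if_pos h1, if_pos (by linarith : ((s:I) : ℝ) ≤ 4/5),
            min_eq_left (by linarith : ((s:I) : ℝ) ≤ 4/5 - (s:ℝ)), WZfun_apply, if_pos h1]
        by_cases h2 : ((s:I) : ℝ) ≤ 2/5
        · rw [if_neg h1, if_pos h2, if_pos (by linarith : ((s:I) : ℝ) ≤ 4/5),
            min_eq_left (by linarith : ((s:I) : ℝ) ≤ 4/5 - (s:ℝ)), WZfun_apply, if_neg h1]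
          apply Subtype.ext
          show (S.h (S.h (S.x, 1), pj (1 - (1 - (((0:I)) : ℝ)) * (5 * (s : ℝ) - 1)))).val = _
          rw [show (1 - (1 - (((0:I)) : ℝ)) * (5 * (s : ℝ) - 1)) = 2 - 5 * (s:ℝ) by
            rw [show (((0:I)) : ℝ) = 0 by norm_num]; ring]
        by_cases h3 : ((s:I) : ℝ) ≤ 3/5
        · rw [if_neg h1, if_neg h2, if_pos h3, if_pos (by linarith : ((s:I) : ℝ) ≤ 4/5),
            min_eq_right (by linarith : 4/5 - (s:ℝ) ≤ (s : ℝ)), WZfun_apply]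
          by_cases hb : (4/5 - (s:ℝ)) ≤ 1/5
          · have hs35 : (s:ℝ) = 3/5 := by linarith
            rw [if_pos hb]
            apply Subtype.ext
            show (S.h (S.h (S.h (S.x, 1), pj (5 * (s : ℝ) - 2)), (0:I))).val = _
            rw [hs35, show pj (5 * (3/5 : ℝ) - 2) = 1 by norm_num [pj_one], S.hh0]
            rw [show pj (5 * (4/5 - (3/5:ℝ))) = 1 by norm_num [pj_one]]
          · rw [if_neg hb]
            apply Subtype.ext
            show (S.h (S.h (S.h (S.x, 1), pj (5 * (s : ℝ) - 2)), (0:I))).val = _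
            rw [S.hh0]
            rw [show (2 - 5 * (4/5 - (s:ℝ))) = 5 * (s:ℝ) - 2 by ring]
        by_cases h4 : ((s:I) : ℝ) ≤ 4/5
        · rw [if_neg h1, if_neg h2, if_neg h3, if_pos h4, if_pos h4,
            min_eq_right (by linarith : 4/5 - (s:ℝ) ≤ (s : ℝ)), WZfun_apply,
            if_pos (by linarith : (4/5 - (s:ℝ)) ≤ 1/5)]
          apply Subtype.ext
          show (S.h (S.h (S.h (S.x, pj (4 - 5 * (s : ℝ))), 1), (0:I))).val = _
          rw [S.hh0]
          rw [show (5 * (4/5 - (s:ℝ))) = 4 - 5 * (s:ℝ) by ring]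
        · rw [if_neg h1, if_neg h2, if_neg h3, if_neg h4, if_neg h4]
          apply Subtype.ext
          show (S.h (⟨(p.val.1 (pj (5 * (s : ℝ) - 4))).val, _⟩, (0:I))).val = _
          rw [S.hh0]
      exact congrArg Subtype.val key
    · apply Subtype.ext
      show (S.H (jmap S p.val.2, 0)).val = (p.val.2).val
      rw [S.hH0]
      rfl
  · intro p
    apply Subtype.ext
    apply Prod.ext
    · ext s
      have key : H1Fun S ((1, p), s) = (PhiBig S) (PsiMap S p, s) := by
        rw [H1Fun_apply]
        show _ = (⟨(S.h (PsiFun S (p, s), 1)).val, S.hend _⟩ : ↥S.Z)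
        unfold PsiFun
        by_cases h1 : ((s:I) : ℝ) ≤ 1/5
        · rw [if_pos h1, if_pos h1]
        by_cases h2 : ((s:I) : ℝ) ≤ 2/5
        · rw [if_neg h1, if_pos h2, if_neg h1, if_pos h2]
          apply Subtype.ext
          show (S.h (S.h (S.x, 1), pj (1 - (1 - (((1:I)) : ℝ)) * (5 * (s : ℝ) - 1)))).val = _
          rw [show (1 - (1 - (((1:I)) : ℝ)) * (5 * (s : ℝ) - 1)) = (1:ℝ) by
            rw [show (((1:I)) : ℝ) = 1 by norm_num]; ring, pj_one]
        by_cases h3 : ((s:I) : ℝ) ≤ 3/5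
        · rw [if_neg h1, if_neg h2, if_pos h3, if_neg h1, if_neg h2, if_pos h3]
        by_cases h4 : ((s:I) : ℝ) ≤ 4/5
        · rw [if_neg h1, if_neg h2, if_neg h3, if_pos h4, if_neg h1, if_neg h2, if_neg h3,
            if_pos h4]
        · rw [if_neg h1, if_neg h2, if_neg h3, if_neg h4, if_neg h1, if_neg h2, if_neg h3,
            if_neg h4]
      exact congrArg Subtype.val key
    · exact Subtype.ext rfl

def H2Fun : (I × EB S) × I → ↥S.Z := fun w =>
  if ((w.2 : ℝ)) ≤ 4/5 then
    WZfun S (min ((w.1.1 : ℝ) * (2/5)) (min (w.2 : ℝ) (4/5 - (w.2 : ℝ))))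
  else w.1.2.val.1 (pj (5 * (w.2 : ℝ) - 4))

lemma H2Fun_apply (t : I) (p : EB S) (s : I) : H2Fun S ((t, p), s) =
    if ((s : ℝ)) ≤ 4/5 then
      WZfun S (min ((t : ℝ) * (2/5)) (min (s : ℝ) (4/5 - (s : ℝ))))
    else p.val.1 (pj (5 * (s : ℝ) - 4)) := rfl

lemma cont_H2Fun : Continuous (H2Fun S) := by
  have hs : Continuous fun w : (I × EB S) × I => ((w.2 : I) : ℝ) :=
    continuous_subtype_val.comp continuous_snd
  refine Continuous.if_le ((cont_WZfun S).comp (by fun_prop)) ?_ hs continuous_const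
    fun w hw => ?_
  · refine Continuous.eval (continuous_fst.comp (continuous_subtype_val.comp
      (continuous_snd.comp continuous_fst))) (cont_pj.comp (by fun_prop))
  · have e0 : min ((w.1.1 : ℝ) * (2/5)) (min (w.2 : ℝ) (4/5 - (w.2 : ℝ))) = 0 := by
      rw [hw]
      rw [show min (4/5 : ℝ) (4/5 - 4/5) = 0 by norm_num]
      exact min_eq_right (mul_nonneg w.1.1.2.1 (by norm_num))
    rw [e0, WZfun_zero, show pj (5 * (w.2 : ℝ) - 4) = 0 by rw [hw]; norm_num [pj_zero],
      memB_start S w.1.2]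

def H2Big : C((I × EB S) × I, ↥S.Z) := ⟨H2Fun S, cont_H2Fun S⟩

def H2CM : C(I × EB S, EB S) := by
  refine ⟨fun w => ⟨((H2Big S).curry w, w.2.val.2), ?_, ?_⟩, ?_⟩
  · show H2Fun S (w, 0) ∈ ({z1 S} : Set ↥S.Z)
    apply Set.mem_singleton_iff.mpr
    rw [H2Fun_apply, if_pos (by norm_num : (((0:I)) : ℝ) ≤ 4/5)]
    have e0 : min ((w.1 : ℝ) * (2/5)) (min (((0:I)) : ℝ) (4/5 - (((0:I)) : ℝ))) = 0 := by
      rw [show (((0:I)) : ℝ) = 0 by norm_num, show min (0:ℝ) (4/5 - 0) = 0 by norm_num]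
      exact min_eq_right (mul_nonneg w.1.2.1 (by norm_num))
    rw [e0, WZfun_zero]
  · show H2Fun S (w, 1) = restrictMap S.r S.Z w.2.val.2
    rw [H2Fun_apply, if_neg (by norm_num : ¬ (((1:I)) : ℝ) ≤ 4/5),
      show pj (5 * (((1:I)) : ℝ) - 4) = 1 by norm_num [pj_one]]
    exact memB_end S w.2
  · exact ((H2Big S).curry.continuous.prodMk (continuous_snd.comp
      (continuous_subtype_val.comp continuous_snd))).subtype_mk _

def H2Hom : (rmap (restrictMap S.r S.Z) ({z1 S} : Set ↥S.Z)).Homotopy (M1Map S) := by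
  refine { toContinuousMap := H2CM S, map_zero_left := ?_, map_one_left := ?_ }
  · intro p
    apply Subtype.ext
    apply Prod.ext
    · ext s
      have key : H2Fun S ((0, p), s) = (p.val.1.comp rcm) s := by
        rw [H2Fun_apply]
        show _ = p.val.1 (pj (rfun (s : ℝ)))
        split_ifs with hc
        · have e0 : min ((((0:I)) : ℝ) * (2/5)) (min (s : ℝ) (4/5 - (s : ℝ))) = 0 := by
            rw [show (((0:I)) : ℝ) = 0 by norm_num, zero_mul]
            refine min_eq_left (le_min s.2.1 (by linarith))
          rw [e0, WZfun_zero]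
          rw [show rfun (s:ℝ) = 0 by simp only [rfun]; rw [max_eq_right]; linarith, pj_zero]
          exact (memB_start S p).symm
        · rw [show rfun (s:ℝ) = 5 * (s:ℝ) - 4 by
            simp only [rfun]; rw [max_eq_left]; push_neg at hc; linarith]
      exact congrArg Subtype.val key
    · rfl
  · intro p
    apply Subtype.ext
    apply Prod.ext
    · ext s
      have key : H2Fun S ((1, p), s) = M1Fun S (p, s) := by
        rw [H2Fun_apply, M1Fun_apply]
        split_ifs with hc
        · congr 1
          rw [show (((1:I)) : ℝ) = 1 by norm_num, one_mul]
          rcases le_total ((s:I) : ℝ) (2/5) with hd | hd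
          · exact min_eq_right (le_trans (min_le_left _ _) hd)
          · exact min_eq_right (le_trans (min_le_right _ _) (by linarith))
        · rfl
      exact congrArg Subtype.val key
    · rfl

lemma chainA : ((PhiMap S).comp (PsiMap S)).Homotopic (ContinuousMap.id _) := by
  have h1 : (M1Map S).Homotopic ((PhiMap S).comp (PsiMap S)) := ⟨H1Hom S⟩
  have h2 : (rmap (restrictMap S.r S.Z) ({z1 S} : Set ↥S.Z)).Homotopic (M1Map S) := ⟨H2Hom S⟩
  exact h1.symm.trans (h2.symm.trans (rmap_homotopic _ _))

lemma chainB : ((PsiMap S).comp (PhiMap S)).Homotopic (ContinuousMap.id _) := by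
  have h1 : (rmap (restrictMap S.r S.U) ({S.x} : Set ↥S.U)).Homotopic
    ((PsiMap S).comp (PhiMap S)) := ⟨GbHom S⟩
  exact h1.symm.trans (rmap_homotopic _ _)

end Hofib13
end Main

/-- Compatible deformations of `U` into `Z ⊆ U` (upstairs and downstairs)
induce a well-defined continuous map `Φ : hofib_x(r|_U) → hofib_{h(x,1)}(r|_Z)`,
`Φ(γ, y) = (s ↦ h(γ(s), 1), H(y, 1))`, which is a homotopy equivalence. -/
theorem hofib_deformation_homotopy_equiv
    {Y X : Type} [TopologicalSpace Y] [TopologicalSpace X]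
    (r : C(Y, X)) (Z U : Set X) (hZU : Z ⊆ U)
    (h : C(↥U × I, ↥U)) (H : C(↥(r ⁻¹' U) × I, ↥(r ⁻¹' U)))
    (hh0 : ∀ z : ↥U, h (z, 0) = z)
    (hH0 : ∀ y : ↥(r ⁻¹' U), H (y, 0) = y)
    (hcomm : ∀ (y : ↥(r ⁻¹' U)) (t : I),
      restrictMap r U (H (y, t)) = h (restrictMap r U y, t))
    (hZstable : ∀ z : ↥U, (z : X) ∈ Z → ∀ t : I, ((h (z, t) : ↥U) : X) ∈ Z)
    (hend : ∀ z : ↥U, ((h (z, 1) : ↥U) : X) ∈ Z)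
    (x : ↥U) :
    ∃ Φ : C(↥(hoFiberSet (restrictMap r U) ({x} : Set ↥U)),
        ↥(hoFiberSet (restrictMap r Z) ({⟨((h (x, 1) : ↥U) : X), hend x⟩} : Set ↥Z))),
      (∀ p : ↥(hoFiberSet (restrictMap r U) ({x} : Set ↥U)),
        (∀ s : I, ((Φ p).1.1 s).val = (h ((p : (C(I, ↥U) × ↥(r ⁻¹' U))).1 s, 1)).val) ∧
          ((Φ p).1.2).val = (H ((p : (C(I, ↥U) × ↥(r ⁻¹' U))).2, 1)).val) ∧
        IsHomotopyEquiv Φ := by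
  let S : Hofib13.Setup Y X := ⟨r, Z, U, hZU, h, H, hh0, hH0, hcomm, hZstable, hend, x⟩
  exact ⟨Hofib13.PhiMap S, fun p => ⟨fun s => rfl, rfl⟩,
    Hofib13.PsiMap S, Hofib13.chainB S, Hofib13.chainA S⟩
end

section
/- Let p : E → B be a Hurewicz fibration which is also a homotopy equivalence. Then for every topological space A and every continuous map f : A → B, the first projection from the pullback {(a,e) ∈ A × E : f(a) = p(e)} (with the subspace topology of the product) to A is a homotopy equivalence. -/
open unitInterval

/-- `p` is a Hurewicz fibration: it has the homotopy lifting property with respect to every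
topological space. -/
def IsHurewiczFibration {E B : Type} [TopologicalSpace E] [TopologicalSpace B]
    (p : C(E, B)) : Prop :=
  ∀ (T : Type) [TopologicalSpace T], ∀ (Hm : C(T × I, B)) (h₀ : C(T, E)),
    (∀ t : T, p (h₀ t) = Hm (t, 0)) →
      ∃ Ht : C(T × I, E), (∀ x : T × I, p (Ht x) = Hm x) ∧ ∀ t : T, Ht (t, 0) = h₀ t

/-!
Lifting a homotopy `p ∘ g ≃ id`, `g` a homotopy inverse, starting at `g` gives a section `s` of
`p` with `s ∘ p ≃ id`. Such a homotopy `Φ` can be made vertical: followed by `s ∘ p ∘ Φ` run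
backwards it lies over the loops `γ ⬝ γ⁻¹`, `γ = p ∘ Φ (·, e)`, which contract in a square.
Lifting the contraction with this composite as initial value, and reading the lift along a path
through the part of the square lying over `p e`, gives a homotopy `id ≃ s ∘ p` over `B`, i.e.
`p` is shrinkable. A section together with such a vertical homotopy pulls back along any `f`.
-/

open ContinuousMap

def IsShrinkable {E B : Type*} [TopologicalSpace E] [TopologicalSpace B] (p : C(E, B)) : Prop :=
  ∃ s : C(B, E), p.comp s = .id B ∧
    ∃ V : (ContinuousMap.id E).Homotopy (s.comp p), ∀ t e, p (V (t, e)) = p e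

def pullbackFst {A E B : Type*} [TopologicalSpace A] [TopologicalSpace E] [TopologicalSpace B]
    (p : C(E, B)) (f : C(A, B)) : C({q : A × E // f q.1 = p q.2}, A) :=
  ⟨fun q => q.1.1, continuous_fst.comp continuous_subtype_val⟩

theorem IsShrinkable.pullback {A E B : Type*} [TopologicalSpace A] [TopologicalSpace E]
    [TopologicalSpace B] {p : C(E, B)} (hp : IsShrinkable p) (f : C(A, B)) :
    IsShrinkable (pullbackFst p f) := by
  obtain ⟨s, hs, V, hV⟩ := hp
  have hps (b : B) : p (s b) = b := DFunLike.congr_fun hs b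
  refine ⟨⟨fun a => ⟨(a, s (f a)), (hps (f a)).symm⟩, by fun_prop⟩, rfl,
    ⟨⟨fun z => ⟨(z.2.1.1, V (z.1, z.2.1.2)), z.2.2.trans (hV _ _).symm⟩, by fun_prop⟩,
      fun q => ?_, fun q => ?_⟩, fun _ _ => rfl⟩
  · exact Subtype.ext (Prod.ext rfl (V.apply_zero _))
  · exact Subtype.ext (Prod.ext rfl ((V.apply_one _).trans (congrArg s q.2.symm)))

theorem IsShrinkable.isHomotopyEquiv {E B : Type} [TopologicalSpace E] [TopologicalSpace B]
    {p : C(E, B)} (hp : IsShrinkable p) : IsHomotopyEquiv p := by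
  obtain ⟨s, hs, V, -⟩ := hp
  exact ⟨s, ⟨V.symm⟩, hs ▸ .refl _⟩

namespace IsHurewiczFibration

variable {E B : Type} [TopologicalSpace E] [TopologicalSpace B] {p : C(E, B)}

theorem exists_vertical_homotopy (hp : IsHurewiczFibration p) {X : Type} [TopologicalSpace X]
    {a b c : C(X, E)} (Φ : a.Homotopy b) (Ψ : b.Homotopy c)
    (hΨ : ∀ t x, p (Ψ (t, x)) = p (Φ (σ t, x))) :
    ∃ V : a.Homotopy c, ∀ t x, p (V (t, x)) = p (a x) := by
  -- contracts the tent `ρ (·, 0)`, along which `Φ.trans Ψ` runs, through the path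
  -- `t ↦ (t, min t (1 - t))` on which `ρ` vanishes
  let ρ : I × I → I := fun w => Set.projIcc 0 1 zero_le_one (2 * (min (w.1 : ℝ) (1 - w.1) - w.2))
  have hρ_zero (t : I) (x : X) : p ((Φ.trans Ψ) (t, x)) = p (Φ (ρ (t, 0), x)) := by
    have := t.2
    rw [Homotopy.trans_apply]
    split_ifs with ht
    · congr 3
      apply Subtype.ext
      simp only [ρ, Set.coe_projIcc, Set.Icc.coe_zero, sub_zero]
      grind
    · rw [hΨ]
      congr 3
      apply Subtype.ext
      simp only [ρ, Set.coe_projIcc, coe_symm_eq, Set.Icc.coe_zero, sub_zero]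
      grind
  have hρ_tent (t : I) : ρ (t, min t (σ t)) = 0 := by simp [ρ]
  obtain ⟨G, hGp, hG0⟩ := hp (X × I) ⟨fun z => p (Φ (ρ (z.1.2, z.2), z.1.1)), by fun_prop⟩
    ⟨fun z => (Φ.trans Ψ) (z.2, z.1), by fun_prop⟩ (fun z => hρ_zero z.2 z.1)
  refine ⟨⟨⟨fun z => G ((z.2, z.1), min z.1 (σ z.1)), by fun_prop⟩, fun x => ?_, fun x => ?_⟩,
    fun t x => ?_⟩
  · simp [hG0]
  · simp [hG0]
  · change p (G _) = _
    rw [hGp]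
    change p (Φ (ρ (t, min t (σ t)), x)) = _
    rw [hρ_tent, Homotopy.apply_zero]

theorem exists_section_homotopic (hp : IsHurewiczFibration p) (hpe : IsHomotopyEquiv p) :
    ∃ s : C(B, E), p.comp s = .id B ∧ (s.comp p).Homotopic (.id E) := by
  obtain ⟨g, hgp, ⟨F⟩⟩ := hpe
  obtain ⟨L, hLp, hL0⟩ :=
    hp B ⟨fun z => F (z.2, z.1), by fun_prop⟩ g fun b => (F.apply_zero b).symm
  let s : C(B, E) := ⟨fun b => L (b, 1), by fun_prop⟩
  let hgs : g.Homotopy s := ⟨⟨fun z => L (z.2, z.1), by fun_prop⟩, hL0, fun _ => rfl⟩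
  refine ⟨s, ContinuousMap.ext fun b => (hLp (b, 1)).trans (F.apply_one b), ?_⟩
  exact (Homotopic.comp ⟨hgs.symm⟩ (.refl p)).trans hgp

theorem isShrinkable (hp : IsHurewiczFibration p) (hpe : IsHomotopyEquiv p) : IsShrinkable p := by
  obtain ⟨s, hs, hsp⟩ := hp.exists_section_homotopic hpe
  obtain ⟨Φ⟩ := hsp.symm
  have hps (b : B) : p (s b) = b := DFunLike.congr_fun hs b
  let Ψ : (s.comp p).Homotopy (s.comp p) :=
    ⟨⟨fun z => s (p (Φ (σ z.1, z.2))), by fun_prop⟩, fun e => by simp [hps], fun e => by simp⟩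
  obtain ⟨V, hV⟩ := hp.exists_vertical_homotopy Φ Ψ fun _ _ => hps _
  exact ⟨s, hs, V, hV⟩

end IsHurewiczFibration

/-- The pullback of a Hurewicz fibration which is a homotopy equivalence is
again a homotopy equivalence (namely the projection of the pullback to the base). -/
theorem pullback_of_hurewicz_homotopy_equiv
    {E B A : Type} [TopologicalSpace E] [TopologicalSpace B] [TopologicalSpace A]
    (p : C(E, B)) (hp : IsHurewiczFibration p) (hpe : IsHomotopyEquiv p) (f : C(A, B)) :
    IsHomotopyEquiv
      (⟨fun q : {q : A × E // f q.1 = p q.2} => q.1.1,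
        continuous_fst.comp continuous_subtype_val⟩ :
        C({q : A × E // f q.1 = p q.2}, A)) :=
  ((hp.isShrinkable hpe).pullback f).isHomotopyEquiv
end
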